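/- arXiv:2112.10326 — 5 statements merged into one kernel-verified Lean document; each statement's English description precedes it below -/
import Mathlib

section
/- Initial data estimates from Lemma 2.2: Let p > 1, s₁ < 0, s₂ < 0, and let w be a nonzero Schwartz function on ℝ². Then there exists C > 0 such that for all a, a' ∈ [1/2, 2], all v ∈ ℝ with |v| ≥ 1, and all λ, ν with 0 < ν ≤ λ ≤ 1, the function u₀^{(a)}(x,y) = a λ^{−2/(p−1)} e^{−ivx/2} w(νx/λ, ν²y/λ²) satisfies ‖u₀^{(a)}‖_{H^{s₁,s₂}} ≤ C λ^{−2/(p−1)} |v|^{s₁} (λ/ν)^{3/2}, and moreover ‖u₀^{(a)} − u₀^{(a')}‖_{H^{s₁,s₂}} ≤ C λ^{−2/(p−1)} |v|^{s₁} (λ/ν)^{3/2} |a − a'|. -/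
open MeasureTheory Complex
open scoped ENNReal NNReal

noncomputable def ftransform (f : ℝ × ℝ → ℂ) (ξ η : ℝ) : ℂ :=
  ∫ q : ℝ × ℝ, Complex.exp (-Complex.I * (q.1 * ξ + q.2 * η)) * f q

noncomputable def sobNormSq (s₁ s₂ : ℝ) (f : ℝ × ℝ → ℂ) : ℝ≥0∞ :=
  ∫⁻ q : ℝ × ℝ, ENNReal.ofReal
    ((1 + q.1 ^ 2) ^ s₁ * (1 + q.2 ^ 2) ^ s₂ * ‖ftransform f q.1 q.2‖ ^ 2)

noncomputable def sobNorm (s₁ s₂ : ℝ) (f : ℝ × ℝ → ℂ) : ℝ≥0∞ :=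
  sobNormSq s₁ s₂ f ^ (1 / 2 : ℝ)

def IsHWSSolution (μ P : ℝ) (u : ℝ → ℝ × ℝ → ℂ) : Prop :=
  ∀ t : ℝ,
    Integrable (u t) ∧ MemLp (u t) 2 ∧
    Integrable (fun q => (‖u t q‖ ^ (P - 1) : ℝ) • u t q) ∧
    MemLp (fun q => (‖u t q‖ ^ (P - 1) : ℝ) • u t q) 2 ∧
    ∀ ξ η : ℝ, HasDerivAt (fun s => ftransform (u s) ξ η)
      (-Complex.I * ((ξ ^ 2 + |η|) * ftransform (u t) ξ η +
        μ * ftransform (fun q => (‖u t q‖ ^ (P - 1) : ℝ) • u t q) ξ η)) t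

open SchwartzMap FourierTransform
open scoped RealInnerProductSpace

noncomputable def eLV : EuclideanSpace ℝ (Fin 2) ≃L[ℝ] ℝ × ℝ :=
  (EuclideanSpace.equiv (Fin 2) ℝ).trans (ContinuousLinearEquiv.finTwoArrow ℝ ℝ)

noncomputable def mEV : EuclideanSpace ℝ (Fin 2) ≃ᵐ ℝ × ℝ :=
  (MeasurableEquiv.toLp 2 (Fin 2 → ℝ)).symm.trans MeasurableEquiv.finTwoArrow

noncomputable def wTilde (w : SchwartzMap (ℝ × ℝ) ℂ) : SchwartzMap (EuclideanSpace ℝ (Fin 2)) ℂ :=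
  SchwartzMap.compCLMOfContinuousLinearEquiv ℝ eLV w

lemma ftW_eq (w : SchwartzMap (ℝ × ℝ) ℂ) (u t : ℝ) :
    ftransform (⇑w) u t = 𝓕 (⇑(wTilde w)) ((2 * Real.pi)⁻¹ • eLV.symm (u, t)) := by
  have hm : MeasurePreserving (⇑mEV) volume volume := by
    have := (volume_preserving_finTwoArrow ℝ).comp
      (EuclideanSpace.volume_preserving_symm_measurableEquiv_toLp (Fin 2))
    exact this
  rw [ftransform, ← hm.integral_comp mEV.measurableEmbedding, Real.fourier_eq']
  refine integral_congr_ae (Filter.Eventually.of_forall fun z => ?_)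
  dsimp only
  have hmz : mEV z = (z 0, z 1) := rfl
  have hinner : (inner ℝ z ((2 * Real.pi)⁻¹ • eLV.symm (u, t)) : ℝ)
      = (2 * Real.pi)⁻¹ * (z 0 * u + z 1 * t) := by
    rw [real_inner_smul_right]
    congr 1
    have h0 : (eLV.symm (u, t)) 0 = u := rfl
    have h1 : (eLV.symm (u, t)) 1 = t := rfl
    simp [PiLp.inner_apply, Fin.sum_univ_two, h0, h1]
    ring
  rw [hinner, hmz, smul_eq_mul]
  have hw : wTilde w z = w (z 0, z 1) := rfl
  rw [hw]
  congr 1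
  push_cast
  congr 1
  have hπc : (Real.pi : ℂ) ≠ 0 := by exact_mod_cast Real.pi_ne_zero
  field_simp

lemma ftW_decay (w : SchwartzMap (ℝ × ℝ) ℂ) (k : ℕ) :
    ∃ C : ℝ, 0 ≤ C ∧ ∀ q : ℝ × ℝ, (1 + ‖q‖) ^ k * ‖ftransform (⇑w) q.1 q.2‖ ≤ C := by
  set Φ : SchwartzMap (EuclideanSpace ℝ (Fin 2)) ℂ :=
    SchwartzMap.fourierTransformCLM ℂ (wTilde w) with hΦ
  set Cs : ℝ := 2 ^ k * (Finset.Iic (k, 0)).sup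
    (fun m => SchwartzMap.seminorm ℝ m.1 m.2) Φ with hCs
  have hCs0 : 0 ≤ Cs := by positivity
  have hbound : ∀ x, (1 + ‖x‖) ^ k * ‖Φ x‖ ≤ Cs := by
    intro x
    have := SchwartzMap.one_add_le_sup_seminorm_apply (𝕜 := ℝ) (m := (k, 0))
      le_rfl le_rfl Φ x
    simpa [norm_iteratedFDeriv_zero] using this
  refine ⟨7 ^ k * Cs, by positivity, fun q => ?_⟩
  set p : EuclideanSpace ℝ (Fin 2) := (2 * Real.pi)⁻¹ • eLV.symm (q.1, q.2) with hp
  have hft : ftransform (⇑w) q.1 q.2 = Φ p := by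
    rw [hΦ, SchwartzMap.fourierTransformCLM_apply, SchwartzMap.fourier_coe, ← ftW_eq]
  have hne : ‖(eLV.symm (q.1, q.2) : EuclideanSpace ℝ (Fin 2))‖ = Real.sqrt (q.1 ^ 2 + q.2 ^ 2) := by
    rw [EuclideanSpace.norm_eq]
    have h0 : (eLV.symm (q.1, q.2)) 0 = q.1 := rfl
    have h1 : (eLV.symm (q.1, q.2)) 1 = q.2 := rfl
    rw [Fin.sum_univ_two, h0, h1]
    simp [Real.norm_eq_abs, sq_abs]
  have hqp : ‖q‖ ≤ 7 * ‖p‖ := by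
    have hnorm : ‖p‖ = (2 * Real.pi)⁻¹ * Real.sqrt (q.1 ^ 2 + q.2 ^ 2) := by
      rw [hp, norm_smul, hne, Real.norm_eq_abs, abs_of_pos (by positivity)]
    have h1 : |q.1| ≤ Real.sqrt (q.1 ^ 2 + q.2 ^ 2) := by
      rw [← Real.sqrt_sq_eq_abs]
      exact Real.sqrt_le_sqrt (by nlinarith)
    have h2 : |q.2| ≤ Real.sqrt (q.1 ^ 2 + q.2 ^ 2) := by
      rw [← Real.sqrt_sq_eq_abs]
      exact Real.sqrt_le_sqrt (by nlinarith)
    have hq : ‖q‖ = max |q.1| |q.2| := rfl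
    have hpi : 2 * Real.pi ≤ 7 := by
      nlinarith [Real.pi_lt_d2]
    have h3 : ‖q‖ ≤ Real.sqrt (q.1 ^ 2 + q.2 ^ 2) := by
      rw [hq]; exact max_le h1 h2
    calc ‖q‖ ≤ Real.sqrt (q.1 ^ 2 + q.2 ^ 2) := h3
      _ = (2 * Real.pi) * ((2 * Real.pi)⁻¹ * Real.sqrt (q.1 ^ 2 + q.2 ^ 2)) := by
          field_simp
      _ ≤ 7 * ‖p‖ := by
          rw [hnorm]
          gcongr
  have hb : (1 : ℝ) + ‖q‖ ≤ 7 * (1 + ‖p‖) := by nlinarith [norm_nonneg p]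
  calc (1 + ‖q‖) ^ k * ‖ftransform (⇑w) q.1 q.2‖
      = (1 + ‖q‖) ^ k * ‖Φ p‖ := by rw [hft]
    _ ≤ (7 * (1 + ‖p‖)) ^ k * ‖Φ p‖ := by
        gcongr
    _ = 7 ^ k * ((1 + ‖p‖) ^ k * ‖Φ p‖) := by rw [mul_pow]; ring
    _ ≤ 7 ^ k * Cs := by
        have := hbound p
        nlinarith [pow_nonneg (by norm_num : (0:ℝ) ≤ 7) k]

lemma K_bound (w : SchwartzMap (ℝ × ℝ) ℂ) (s₁ : ℝ) (hs₁ : s₁ < 0) :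
    ∃ KR : ℝ, 0 ≤ KR ∧
      ∫⁻ q : ℝ × ℝ, ENNReal.ofReal ((1 + q.1 ^ 2) ^ (-s₁) * ‖ftransform (⇑w) q.1 q.2‖ ^ 2)
        ≤ ENNReal.ofReal KR := by
  set k : ℕ := ⌈-s₁⌉₊ + 2 with hk
  obtain ⟨C, hC0, hC⟩ := ftW_decay w k
  set M : ℝ := C ^ 2 with hM
  have hint : Integrable (fun q : ℝ × ℝ => M * (1 + ‖q‖) ^ (-(3:ℝ))) := by
    refine (integrable_one_add_norm ?_).const_mul M
    rw [show Module.finrank ℝ (ℝ × ℝ) = 2 by simp]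
    norm_num
  have hptwise : ∀ q : ℝ × ℝ,
      (1 + q.1 ^ 2) ^ (-s₁) * ‖ftransform (⇑w) q.1 q.2‖ ^ 2 ≤ M * (1 + ‖q‖) ^ (-(3:ℝ)) := by
    intro q
    have hx1 : (1 : ℝ) ≤ 1 + ‖q‖ := by nlinarith [norm_nonneg q]
    have hx0 : (0 : ℝ) < 1 + ‖q‖ := by linarith
    have hq1 : |q.1| ≤ ‖q‖ := by
      have : ‖q.1‖ ≤ ‖q‖ := norm_fst_le q
      simpa [Real.norm_eq_abs] using this
    have h1 : (1 + q.1 ^ 2) ≤ (1 + ‖q‖) ^ (2:ℝ) := by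
      rw [show ((1:ℝ) + ‖q‖) ^ (2:ℝ) = (1 + ‖q‖) ^ (2:ℕ) by
        rw [← Real.rpow_natCast (1 + ‖q‖) 2]; norm_num]
      have : q.1 ^ 2 ≤ ‖q‖ ^ 2 := by nlinarith [abs_nonneg q.1, _root_.sq_abs q.1]
      nlinarith [norm_nonneg q]
    have h2 : (1 + q.1 ^ 2) ^ (-s₁) ≤ (1 + ‖q‖) ^ ((2:ℝ) * (-s₁)) := by
      rw [Real.rpow_mul (le_of_lt hx0)]
      exact Real.rpow_le_rpow (by positivity) h1 (by linarith)
    have hpk : (0:ℝ) < (1 + ‖q‖) ^ k := by positivity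
    have hW : ‖ftransform (⇑w) q.1 q.2‖ ≤ C * ((1 + ‖q‖) ^ k)⁻¹ := by
      rw [← div_eq_mul_inv, le_div_iff₀ hpk]
      nlinarith [hC q]
    have h3 : ‖ftransform (⇑w) q.1 q.2‖ ^ 2 ≤ M * (((1 + ‖q‖) ^ k)⁻¹) ^ 2 := by
      have := pow_le_pow_left₀ (norm_nonneg (ftransform (⇑w) q.1 q.2)) hW 2
      calc ‖ftransform (⇑w) q.1 q.2‖ ^ 2 ≤ (C * ((1 + ‖q‖) ^ k)⁻¹) ^ 2 := this
        _ = M * (((1 + ‖q‖) ^ k)⁻¹) ^ 2 := by rw [hM]; ring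
    have hinvk : (((1 + ‖q‖) ^ k)⁻¹) ^ 2 = (1 + ‖q‖) ^ (-(2 * (k:ℝ))) := by
      rw [← Real.rpow_natCast (1 + ‖q‖) k, ← Real.rpow_neg (le_of_lt hx0),
        ← Real.rpow_natCast ((1 + ‖q‖) ^ (-(k:ℝ))) 2, ← Real.rpow_mul (le_of_lt hx0)]
      congr 1
      push_cast
      ring
    have hks : (2:ℝ) * (-s₁) + (-(2 * (k:ℝ))) ≤ -(3:ℝ) := by
      have h := Nat.le_ceil (-s₁)
      have hkk : (k : ℝ) = (⌈-s₁⌉₊ : ℝ) + 2 := by rw [hk]; push_cast; ring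
      nlinarith
    have hM0 : 0 ≤ M := by positivity
    calc (1 + q.1 ^ 2) ^ (-s₁) * ‖ftransform (⇑w) q.1 q.2‖ ^ 2
        ≤ (1 + ‖q‖) ^ ((2:ℝ) * (-s₁)) * (M * (((1 + ‖q‖) ^ k)⁻¹) ^ 2) := by
          refine mul_le_mul h2 h3 (by positivity) (by positivity)
      _ = M * (1 + ‖q‖) ^ ((2:ℝ) * (-s₁) + (-(2 * (k:ℝ)))) := by
          rw [hinvk, Real.rpow_add hx0]; ring
      _ ≤ M * (1 + ‖q‖) ^ (-(3:ℝ)) := by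
          have := Real.rpow_le_rpow_of_exponent_le hx1 hks
          exact mul_le_mul_of_nonneg_left this hM0
  refine ⟨∫ q : ℝ × ℝ, M * (1 + ‖q‖) ^ (-(3:ℝ)), integral_nonneg (fun q => by positivity), ?_⟩
  rw [MeasureTheory.ofReal_integral_eq_lintegral_ofReal hint
    (Filter.Eventually.of_forall fun q => by positivity)]
  exact lintegral_mono fun q => ENNReal.ofReal_le_ofReal (hptwise q)

lemma smul_prod_smul (c d : ℝ≥0∞) (hd : d ≠ ⊤) (μ ν : Measure ℝ) [SigmaFinite μ]
    [SigmaFinite ν] : (c • μ).prod (d • ν) = (c * d) • μ.prod ν := by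
  ext s hs
  rw [Measure.prod_apply hs, Measure.smul_apply, Measure.prod_apply hs,
    lintegral_smul_measure]
  simp_rw [Measure.smul_apply, smul_eq_mul]
  rw [lintegral_const_mul' _ _ hd, mul_assoc]

lemma map_affine_vol (a c : ℝ) (ha : 0 < a) :
    Measure.map (fun x : ℝ => (x + c) * a) volume = ENNReal.ofReal a⁻¹ • volume := by
  have h : (fun x : ℝ => (x + c) * a) = (fun x : ℝ => x * a) ∘ (fun x : ℝ => x + c) := rfl
  rw [h, ← Measure.map_map (measurable_mul_const a) (measurable_add_const c),
    map_add_right_eq_self, Real.map_volume_mul_right ha.ne', abs_inv, abs_of_pos ha]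

lemma map_prodMap_vol (f g : ℝ → ℝ) (hf : Measurable f) (hg : Measurable g) (cf cg : ℝ)
    (hcg : 0 ≤ cg)
    (hmf : Measure.map f volume = ENNReal.ofReal cf • volume)
    (hmg : Measure.map g volume = ENNReal.ofReal cg • volume) :
    Measure.map (Prod.map f g) (volume : Measure (ℝ × ℝ))
      = ENNReal.ofReal (cf * cg) • volume := by
  rw [Measure.volume_eq_prod, ← Measure.map_prod_map _ _ hf hg, hmf, hmg,
    smul_prod_smul _ _ ENNReal.ofReal_ne_top, ← ENNReal.ofReal_mul' hcg]

lemma ft_scale (f : ℝ × ℝ → ℂ) (b v α β ξ η : ℝ) (hα : 0 < α) (hβ : 0 < β) :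
    ftransform (fun q => (b : ℝ) •
        (Complex.exp (-Complex.I * v * q.1 / 2) * f (α * q.1, β * q.2))) ξ η
      = (b * (α * β)⁻¹ : ℝ) • ftransform f ((ξ + v / 2) / α) (η / β) := by
  set u : ℝ := (ξ + v / 2) / α with hu
  set s : ℝ := η / β with hs
  set G : ℝ × ℝ → ℂ := fun p => Complex.exp (-Complex.I * (p.1 * u + p.2 * s)) * f p with hG
  set T : ℝ × ℝ ≃ᵐ ℝ × ℝ :=
    ((Homeomorph.mulRight₀ α hα.ne').prodCongr (Homeomorph.mulRight₀ β hβ.ne')).toMeasurableEquiv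
    with hT
  have hTq : ∀ q : ℝ × ℝ, T q = (q.1 * α, q.2 * β) := fun q => rfl
  have hmap : Measure.map (⇑T) volume = ENNReal.ofReal ((α * β)⁻¹) • volume := by
    have h1 : Measure.map (fun x : ℝ => x * α) volume = ENNReal.ofReal α⁻¹ • volume := by
      rw [Real.map_volume_mul_right hα.ne', abs_inv, abs_of_pos hα]
    have h2 : Measure.map (fun x : ℝ => x * β) volume = ENNReal.ofReal β⁻¹ • volume := by
      rw [Real.map_volume_mul_right hβ.ne', abs_inv, abs_of_pos hβ]
    have hC : ⇑T = Prod.map (fun x : ℝ => x * α) (fun x : ℝ => x * β) := rfl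
    rw [hC, map_prodMap_vol _ _ (measurable_mul_const α) (measurable_mul_const β) _ _
      (by positivity) h1 h2, ← mul_inv]
  have hintg : ∀ q : ℝ × ℝ,
      Complex.exp (-Complex.I * (q.1 * ξ + q.2 * η)) *
        ((b : ℝ) • (Complex.exp (-Complex.I * v * q.1 / 2) * f (α * q.1, β * q.2)))
      = (b : ℝ) • G (T q) := by
    intro q
    rw [hTq, hG]
    dsimp only
    rw [mul_smul_comm]
    congr 1
    rw [← mul_assoc, ← Complex.exp_add]
    congr 2
    · congr 1
      have hα' : (α : ℂ) ≠ 0 := by exact_mod_cast hα.ne'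
      have hβ' : (β : ℂ) ≠ 0 := by exact_mod_cast hβ.ne'
      rw [hu, hs]
      push_cast
      field_simp
      ring
    · rw [mul_comm (α:ℝ) q.1, mul_comm (β:ℝ) q.2]
  rw [ftransform]
  simp_rw [hintg]
  rw [integral_smul]
  have : ∫ q : ℝ × ℝ, G (T q) = ((α * β)⁻¹ : ℝ) • ∫ p : ℝ × ℝ, G p := by
    rw [← MeasureTheory.integral_map_equiv T G, hmap, integral_smul_measure,
      ENNReal.toReal_ofReal (by positivity)]
  rw [this, smul_smul]
  rfl

lemma key_ineq (s₁ : ℝ) (hs₁ : s₁ < 0) (v ξ α : ℝ) (hv : 1 ≤ |v|) (hα : 0 < α)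
    (hα1 : α ≤ 1) :
    (1 + ξ ^ 2) ^ s₁ ≤ 8 ^ (-s₁) * |v| ^ (2 * s₁) * (1 + ((ξ + v / 2) / α) ^ 2) ^ (-s₁) := by
  set u : ℝ := (ξ + v / 2) / α with hu
  have hv0 : (0:ℝ) < |v| := lt_of_lt_of_le one_pos hv
  have habs : |v| / 2 ≤ |u| + |ξ| := by
    have hαu : α * u = ξ + v / 2 := by rw [hu]; field_simp
    have h1 : |v| / 2 = |ξ + v / 2 - ξ| := by rw [show ξ + v/2 - ξ = v/2 by ring, abs_div]; norm_num
    have h2 : |ξ + v / 2| ≤ |u| := by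
      rw [← hαu, abs_mul, abs_of_pos hα]
      nlinarith [abs_nonneg u]
    calc |v| / 2 = |ξ + v / 2 - ξ| := h1
      _ ≤ |ξ + v / 2| + |ξ| := abs_sub _ _
      _ ≤ |u| + |ξ| := by linarith
  have hkey : v ^ 2 / (8 * (1 + u ^ 2)) ≤ 1 + ξ ^ 2 := by
    have hA := abs_nonneg u
    have hB := abs_nonneg ξ
    have h2 : v ^ 2 / 4 ≤ (|u| + |ξ|) ^ 2 := by
      have := _root_.sq_abs v
      nlinarith [sq_nonneg (|v|/2)]
    have h3 : (|u| + |ξ|) ^ 2 ≤ 2 * (u ^ 2 + ξ ^ 2) := by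
      nlinarith [sq_nonneg (|u| - |ξ|), _root_.sq_abs u, _root_.sq_abs ξ]
    have h4 : v ^ 2 / 8 ≤ (1 + ξ ^ 2) * (1 + u ^ 2) := by
      nlinarith [sq_nonneg (u * ξ), sq_nonneg u, sq_nonneg ξ]
    rw [div_le_iff₀ (by positivity)]
    nlinarith
  have hvne : v ≠ 0 := by
    intro h
    rw [h, abs_zero] at hv0
    exact lt_irrefl _ hv0
  have hpos : (0:ℝ) < v ^ 2 / (8 * (1 + u ^ 2)) := by positivity
  have hstep : (1 + ξ ^ 2) ^ s₁ ≤ (v ^ 2 / (8 * (1 + u ^ 2))) ^ s₁ :=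
    Real.rpow_le_rpow_of_nonpos hpos hkey hs₁.le
  refine hstep.trans_eq ?_
  rw [Real.div_rpow (by positivity) (by positivity),
    Real.mul_rpow (by norm_num) (by positivity),
    show v ^ 2 = |v| ^ (2:ℕ) by rw [_root_.sq_abs],
    ← Real.rpow_natCast |v| 2, ← Real.rpow_mul (abs_nonneg v)]
  push_cast
  rw [Real.rpow_neg (by norm_num : (0:ℝ) ≤ 8), Real.rpow_neg (by positivity : (0:ℝ) ≤ 1 + u ^ 2)]
  have h8 : (8:ℝ) ^ s₁ ≠ 0 := by positivity
  have hu8 : ((1:ℝ) + u ^ 2) ^ s₁ ≠ 0 := by positivity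
  field_simp

lemma core_est (s₁ s₂ : ℝ) (hs₁ : s₁ < 0) (hs₂ : s₂ < 0) (w : SchwartzMap (ℝ × ℝ) ℂ) :
    ∃ C₀ : ℝ, 0 ≤ C₀ ∧ ∀ b v lam ν : ℝ, 1 ≤ |v| → 0 < ν → ν ≤ lam → lam ≤ 1 →
      sobNorm s₁ s₂ (fun q => (b : ℝ) • (Complex.exp (-Complex.I * v * q.1 / 2) *
          w (ν * q.1 / lam, ν ^ 2 * q.2 / lam ^ 2)))
        ≤ ENNReal.ofReal (C₀ * |b| * |v| ^ s₁ * (lam / ν) ^ (3 / 2 : ℝ)) := by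
  obtain ⟨KR, hKR0, hKR⟩ := K_bound w s₁ hs₁
  refine ⟨Real.sqrt (8 ^ (-s₁) * KR), Real.sqrt_nonneg _, ?_⟩
  set C₀ : ℝ := Real.sqrt (8 ^ (-s₁) * KR) with hC₀
  intro b v lam ν hv hν hνlam hlam1
  have hlam0 : (0:ℝ) < lam := lt_of_lt_of_le hν hνlam
  have hv0 : (0:ℝ) < |v| := lt_of_lt_of_le one_pos hv
  set α : ℝ := ν / lam with hα
  have hα0 : 0 < α := div_pos hν hlam0
  have hα1 : α ≤ 1 := by rw [hα, div_le_one hlam0]; exact hνlam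
  set β : ℝ := α ^ 2 with hβ
  have hβ0 : 0 < β := by positivity
  have hfun : (fun q : ℝ × ℝ => (b : ℝ) • (Complex.exp (-Complex.I * v * q.1 / 2) *
      w (ν * q.1 / lam, ν ^ 2 * q.2 / lam ^ 2)))
      = fun q => (b : ℝ) • (Complex.exp (-Complex.I * v * q.1 / 2) * w (α * q.1, β * q.2)) := by
    funext q
    rw [show ν * q.1 / lam = α * q.1 by rw [hα]; ring,
      show ν ^ 2 * q.2 / lam ^ 2 = β * q.2 by rw [hβ, hα]; field_simp]
  rw [hfun]
  have hft : ∀ ξ η : ℝ, ftransform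
      (fun q => (b : ℝ) • (Complex.exp (-Complex.I * v * q.1 / 2) * w (α * q.1, β * q.2))) ξ η
      = (b * (α * β)⁻¹ : ℝ) • ftransform (⇑w) ((ξ + v / 2) / α) (η / β) :=
    fun ξ η => ft_scale (⇑w) b v α β ξ η hα0 hβ0
  set D : ℝ := (b * (α * β)⁻¹) ^ 2 * 8 ^ (-s₁) * |v| ^ (2 * s₁) with hD
  have hD0 : 0 ≤ D := by positivity
  set g : ℝ × ℝ → ℝ := fun p => (1 + p.1 ^ 2) ^ (-s₁) * ‖ftransform (⇑w) p.1 p.2‖ ^ 2 with hg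
  have hg0 : ∀ p, 0 ≤ g p := fun p => by positivity
  -- pointwise bound
  have hpoint : ∀ q : ℝ × ℝ,
      (1 + q.1 ^ 2) ^ s₁ * (1 + q.2 ^ 2) ^ s₂ *
        ‖ftransform (fun q => (b : ℝ) •
          (Complex.exp (-Complex.I * v * q.1 / 2) * w (α * q.1, β * q.2))) q.1 q.2‖ ^ 2
      ≤ D * g ((q.1 + v / 2) / α, q.2 / β) := by
    intro q
    rw [hft q.1 q.2]
    have e1 : ‖(b * (α * β)⁻¹ : ℝ) • ftransform (⇑w) ((q.1 + v / 2) / α) (q.2 / β)‖ ^ 2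
        = (b * (α * β)⁻¹) ^ 2 * ‖ftransform (⇑w) ((q.1 + v / 2) / α) (q.2 / β)‖ ^ 2 := by
      rw [norm_smul, Real.norm_eq_abs, mul_pow, _root_.sq_abs]
    rw [e1]
    have k1 := key_ineq s₁ hs₁ v q.1 α hv hα0 hα1
    have k2 : (1 + q.2 ^ 2) ^ s₂ ≤ 1 :=
      Real.rpow_le_one_of_one_le_of_nonpos (by nlinarith [sq_nonneg q.2]) hs₂.le
    have hPQ : (1 + q.1 ^ 2) ^ s₁ * (1 + q.2 ^ 2) ^ s₂
        ≤ 8 ^ (-s₁) * |v| ^ (2 * s₁) * (1 + ((q.1 + v / 2) / α) ^ 2) ^ (-s₁) := by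
      calc (1 + q.1 ^ 2) ^ s₁ * (1 + q.2 ^ 2) ^ s₂
          ≤ (8 ^ (-s₁) * |v| ^ (2 * s₁) * (1 + ((q.1 + v / 2) / α) ^ 2) ^ (-s₁)) * 1 :=
            mul_le_mul k1 k2 (by positivity) (by positivity)
        _ = _ := mul_one _
    have hX0 : (0:ℝ) ≤ (b * (α * β)⁻¹) ^ 2 * ‖ftransform (⇑w) ((q.1 + v / 2) / α) (q.2 / β)‖ ^ 2 := by
      positivity
    calc (1 + q.1 ^ 2) ^ s₁ * (1 + q.2 ^ 2) ^ s₂ *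
          ((b * (α * β)⁻¹) ^ 2 * ‖ftransform (⇑w) ((q.1 + v / 2) / α) (q.2 / β)‖ ^ 2)
        ≤ (8 ^ (-s₁) * |v| ^ (2 * s₁) * (1 + ((q.1 + v / 2) / α) ^ 2) ^ (-s₁)) *
          ((b * (α * β)⁻¹) ^ 2 * ‖ftransform (⇑w) ((q.1 + v / 2) / α) (q.2 / β)‖ ^ 2) :=
          mul_le_mul_of_nonneg_right hPQ hX0
      _ = D * g ((q.1 + v / 2) / α, q.2 / β) := by rw [hD, hg]; dsimp only; ring
  -- change of variables on the lintegral of g ∘ S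
  set eS : ℝ × ℝ ≃ᵐ ℝ × ℝ :=
    (((Homeomorph.addRight (v / 2)).trans (Homeomorph.mulRight₀ α⁻¹ (inv_ne_zero hα0.ne'))).prodCongr
      (Homeomorph.mulRight₀ β⁻¹ (inv_ne_zero hβ0.ne'))).toMeasurableEquiv with heS
  have heSq : ∀ q : ℝ × ℝ, eS q = ((q.1 + v / 2) / α, q.2 / β) := by
    intro q
    show ((q.1 + v / 2) * α⁻¹, q.2 * β⁻¹) = ((q.1 + v / 2) / α, q.2 / β)
    simp [div_eq_mul_inv]
  have hmapS : Measure.map (⇑eS) volume = ENNReal.ofReal (α * β) • volume := by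
    have hCe : ⇑eS = Prod.map (fun x : ℝ => (x + v / 2) * α⁻¹) (fun y : ℝ => y * β⁻¹) := rfl
    have h1 : Measure.map (fun x : ℝ => (x + v / 2) * α⁻¹) volume
        = ENNReal.ofReal α • volume := by
      rw [map_affine_vol _ _ (inv_pos.mpr hα0), inv_inv]
    have h2 : Measure.map (fun y : ℝ => y * β⁻¹) volume = ENNReal.ofReal β • volume := by
      rw [Real.map_volume_mul_right (inv_ne_zero hβ0.ne'), inv_inv, abs_of_pos hβ0]
    rw [hCe, map_prodMap_vol _ _ ((measurable_add_const _).mul_const _) (measurable_mul_const _)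
      _ _ hβ0.le h1 h2]
  have hchange : ∫⁻ q : ℝ × ℝ, ENNReal.ofReal (g ((q.1 + v / 2) / α, q.2 / β))
      = ENNReal.ofReal (α * β) * ∫⁻ p : ℝ × ℝ, ENNReal.ofReal (g p) := by
    have : ∀ q : ℝ × ℝ, ENNReal.ofReal (g ((q.1 + v / 2) / α, q.2 / β))
        = (fun p => ENNReal.ofReal (g p)) (eS q) := fun q => by rw [heSq q]
    simp_rw [this]
    rw [← MeasureTheory.lintegral_map_equiv (fun p => ENNReal.ofReal (g p)) eS, hmapS,
      lintegral_smul_measure, smul_eq_mul]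
  -- assemble sobNormSq bound
  have hsq : sobNormSq s₁ s₂ (fun q => (b : ℝ) •
      (Complex.exp (-Complex.I * v * q.1 / 2) * w (α * q.1, β * q.2)))
      ≤ ENNReal.ofReal (D * ((α * β) * KR)) := by
    rw [sobNormSq]
    calc ∫⁻ q : ℝ × ℝ, ENNReal.ofReal ((1 + q.1 ^ 2) ^ s₁ * (1 + q.2 ^ 2) ^ s₂ *
          ‖ftransform (fun q => (b : ℝ) •
            (Complex.exp (-Complex.I * v * q.1 / 2) * w (α * q.1, β * q.2))) q.1 q.2‖ ^ 2)
        ≤ ∫⁻ q : ℝ × ℝ, ENNReal.ofReal (D * g ((q.1 + v / 2) / α, q.2 / β)) :=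
          lintegral_mono fun q => ENNReal.ofReal_le_ofReal (hpoint q)
      _ = ENNReal.ofReal D * ∫⁻ q : ℝ × ℝ, ENNReal.ofReal (g ((q.1 + v / 2) / α, q.2 / β)) := by
          simp_rw [ENNReal.ofReal_mul hD0]
          rw [lintegral_const_mul' _ _ ENNReal.ofReal_ne_top]
      _ = ENNReal.ofReal D * (ENNReal.ofReal (α * β) * ∫⁻ p : ℝ × ℝ, ENNReal.ofReal (g p)) := by
          rw [hchange]
      _ ≤ ENNReal.ofReal D * (ENNReal.ofReal (α * β) * ENNReal.ofReal KR) := by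
          exact mul_le_mul_right (mul_le_mul_right hKR _) _
      _ = ENNReal.ofReal (D * ((α * β) * KR)) := by
          rw [← ENNReal.ofReal_mul (by positivity : (0:ℝ) ≤ α * β),
            ← ENNReal.ofReal_mul hD0]
  -- take square roots
  have hXeq : D * ((α * β) * KR) = (C₀ * |b| * |v| ^ s₁ * (lam / ν) ^ (3 / 2 : ℝ)) ^ 2 := by
    have hαinv : α⁻¹ = lam / ν := by rw [hα, inv_div]
    have hC₀sq : C₀ ^ 2 = 8 ^ (-s₁) * KR := Real.sq_sqrt (by positivity)
    have hvsq : (|v| ^ s₁) ^ 2 = |v| ^ (2 * s₁) := by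
      rw [← Real.rpow_natCast (|v| ^ s₁) 2, ← Real.rpow_mul (abs_nonneg v)]
      norm_num
      rw [mul_comm]
    have hlnsq : ((lam / ν) ^ (3 / 2 : ℝ)) ^ 2 = (lam / ν) ^ (3 : ℕ) := by
      rw [← Real.rpow_natCast ((lam / ν) ^ (3 / 2 : ℝ)) 2,
        ← Real.rpow_mul (by positivity : (0:ℝ) ≤ lam / ν)]
      norm_num
    have hab : (α * β)⁻¹ = (lam / ν) ^ (3 : ℕ) := by
      rw [hβ, ← hαinv]
      rw [show α * α ^ 2 = α ^ 3 by ring, ← inv_pow]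
    have hαβne : α * β ≠ 0 := by positivity
    rw [mul_pow, mul_pow, mul_pow, hC₀sq, _root_.sq_abs, hvsq, hlnsq, hD, ← hab]
    field_simp
  rw [sobNorm]
  calc (sobNormSq s₁ s₂ _) ^ (1 / 2 : ℝ)
      ≤ (ENNReal.ofReal (D * ((α * β) * KR))) ^ (1 / 2 : ℝ) :=
        ENNReal.rpow_le_rpow hsq (by norm_num)
    _ = ENNReal.ofReal ((D * ((α * β) * KR)) ^ (1 / 2 : ℝ)) :=
        ENNReal.ofReal_rpow_of_nonneg (by positivity) (by norm_num)
    _ ≤ ENNReal.ofReal (C₀ * |b| * |v| ^ s₁ * (lam / ν) ^ (3 / 2 : ℝ)) := by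
        refine ENNReal.ofReal_le_ofReal ?_
        rw [hXeq, ← Real.rpow_natCast (C₀ * |b| * |v| ^ s₁ * (lam / ν) ^ (3 / 2 : ℝ)) 2,
          ← Real.rpow_mul (by positivity)]
        norm_num

/-- **Initial data estimates from Lemma 2.2.** -/
theorem initial_data_estimates (P s₁ s₂ : ℝ) (hP : 1 < P) (hs₁ : s₁ < 0) (hs₂ : s₂ < 0)
    (w : SchwartzMap (ℝ × ℝ) ℂ) (hw : ⇑w ≠ 0) :
    ∃ C > (0 : ℝ), ∀ a a' : ℝ, a ∈ Set.Icc (1 / 2 : ℝ) 2 → a' ∈ Set.Icc (1 / 2 : ℝ) 2 →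
      ∀ v : ℝ, 1 ≤ |v| → ∀ lam ν : ℝ, 0 < ν → ν ≤ lam → lam ≤ 1 →
      sobNorm s₁ s₂ (fun q => (a * lam ^ (-(2 / (P - 1))) : ℝ) •
          (Complex.exp (-Complex.I * v * q.1 / 2) * w (ν * q.1 / lam, ν ^ 2 * q.2 / lam ^ 2)))
        ≤ ENNReal.ofReal (C * lam ^ (-(2 / (P - 1))) * |v| ^ s₁ * (lam / ν) ^ (3 / 2 : ℝ)) ∧
      sobNorm s₁ s₂ (fun q => (a * lam ^ (-(2 / (P - 1))) : ℝ) •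
            (Complex.exp (-Complex.I * v * q.1 / 2) * w (ν * q.1 / lam, ν ^ 2 * q.2 / lam ^ 2)) -
          (a' * lam ^ (-(2 / (P - 1))) : ℝ) •
            (Complex.exp (-Complex.I * v * q.1 / 2) * w (ν * q.1 / lam, ν ^ 2 * q.2 / lam ^ 2)))
        ≤ ENNReal.ofReal (C * lam ^ (-(2 / (P - 1))) * |v| ^ s₁ * (lam / ν) ^ (3 / 2 : ℝ) *
            |a - a'|) := by
  obtain ⟨C₀, hC₀0, hcore⟩ := core_est s₁ s₂ hs₁ hs₂ w
  refine ⟨2 * C₀ + 1, by positivity, ?_⟩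
  intro a a' ha ha' v hv lam ν hν hνlam hlam1
  have hlam0 : (0:ℝ) < lam := lt_of_lt_of_le hν hνlam
  have hv0 : (0:ℝ) < |v| := lt_of_lt_of_le one_pos hv
  set e : ℝ := lam ^ (-(2 / (P - 1))) with he
  have he0 : 0 < e := Real.rpow_pos_of_pos hlam0 _
  have hX0 : (0:ℝ) < |v| ^ s₁ := Real.rpow_pos_of_pos hv0 _
  have hY0 : (0:ℝ) < (lam / ν) ^ (3 / 2 : ℝ) := Real.rpow_pos_of_pos (by positivity) _
  constructor
  · have h := hcore (a * e) v lam ν hv hν hνlam hlam1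
    refine h.trans (ENNReal.ofReal_le_ofReal ?_)
    have hae : |a * e| = |a| * e := by rw [abs_mul, abs_of_pos he0]
    have ha2 : |a| ≤ 2 := by
      rw [_root_.abs_of_nonneg (by linarith [ha.1] : (0:ℝ) ≤ a)]
      exact ha.2
    have hC : C₀ * |a| ≤ 2 * C₀ + 1 := by nlinarith
    calc C₀ * |a * e| * |v| ^ s₁ * (lam / ν) ^ (3 / 2 : ℝ)
        = (C₀ * |a|) * (e * |v| ^ s₁ * (lam / ν) ^ (3 / 2 : ℝ)) := by rw [hae]; ring
      _ ≤ (2 * C₀ + 1) * (e * |v| ^ s₁ * (lam / ν) ^ (3 / 2 : ℝ)) := by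
          exact mul_le_mul_of_nonneg_right hC (by positivity)
      _ = (2 * C₀ + 1) * e * |v| ^ s₁ * (lam / ν) ^ (3 / 2 : ℝ) := by ring
  · have hfeq : (fun q : ℝ × ℝ => (a * e : ℝ) •
        (Complex.exp (-Complex.I * v * q.1 / 2) * w (ν * q.1 / lam, ν ^ 2 * q.2 / lam ^ 2)) -
          (a' * e : ℝ) •
        (Complex.exp (-Complex.I * v * q.1 / 2) * w (ν * q.1 / lam, ν ^ 2 * q.2 / lam ^ 2)))
        = fun q : ℝ × ℝ => ((a - a') * e : ℝ) •
        (Complex.exp (-Complex.I * v * q.1 / 2) * w (ν * q.1 / lam, ν ^ 2 * q.2 / lam ^ 2)) := by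
      funext q
      rw [← _root_.sub_smul]
      congr 1
      ring
    rw [hfeq]
    have h := hcore ((a - a') * e) v lam ν hv hν hνlam hlam1
    refine h.trans (ENNReal.ofReal_le_ofReal ?_)
    have hae : |(a - a') * e| = |a - a'| * e := by rw [abs_mul, abs_of_pos he0]
    have hC : C₀ ≤ 2 * C₀ + 1 := by linarith
    calc C₀ * |(a - a') * e| * |v| ^ s₁ * (lam / ν) ^ (3 / 2 : ℝ)
        = C₀ * (|a - a'| * (e * |v| ^ s₁ * (lam / ν) ^ (3 / 2 : ℝ))) := by rw [hae]; ring
      _ ≤ (2 * C₀ + 1) * (|a - a'| * (e * |v| ^ s₁ * (lam / ν) ^ (3 / 2 : ℝ))) := by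
          refine mul_le_mul_of_nonneg_right hC (by positivity)
      _ = (2 * C₀ + 1) * e * |v| ^ s₁ * (lam / ν) ^ (3 / 2 : ℝ) * |a - a'| := by ring
end

section
/- Upper bound for anisotropically rescaled initial data (used in the norm inflation proof): Let p > 1, s₁ ≥ 0, s₂ ≥ 0, and let w be a Schwartz function on ℝ². Then there exists C > 0 such that for all a ∈ [1/2, 1] and all λ, ν with 0 < λ ≤ ν, the function U_a(x,y) = a λ^{−2/(p−1)} w(νx/λ, ν²y/λ²) satisfies ‖U_a‖_{H^{s₁,s₂}} ≤ C λ^{−2/(p−1)} (λ/ν)^{3/2 − s₁ − 2s₂}. -/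
open MeasureTheory Complex
open scoped ENNReal NNReal

namespace RescaledAux

open scoped FourierTransform RealInnerProductSpace

noncomputable def eqv2 : EuclideanSpace ℝ (Fin 2) ≃L[ℝ] ℝ × ℝ :=
  (EuclideanSpace.equiv (Fin 2) ℝ).trans (ContinuousLinearEquiv.finTwoArrow ℝ ℝ)

noncomputable def em2 : EuclideanSpace ℝ (Fin 2) ≃ᵐ ℝ × ℝ :=
  (MeasurableEquiv.toLp 2 (Fin 2 → ℝ)).symm.trans MeasurableEquiv.finTwoArrow

lemma em2_eq (v : EuclideanSpace ℝ (Fin 2)) : em2 v = eqv2 v := rfl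

lemma eqv2_apply (v : EuclideanSpace ℝ (Fin 2)) : eqv2 v = (v 0, v 1) := rfl

lemma mp_em2 : MeasurePreserving em2 volume volume :=
  (volume_preserving_finTwoArrow ℝ).comp (EuclideanSpace.volume_preserving_symm_measurableEquiv_toLp (Fin 2))

lemma em2_symm_eq (p : ℝ × ℝ) : em2.symm p = eqv2.symm p := by
  apply em2.injective
  rw [MeasurableEquiv.apply_symm_apply, em2_eq, ContinuousLinearEquiv.apply_symm_apply]

lemma eqv2_symm_fst (p : ℝ × ℝ) : eqv2.symm p 0 = p.1 := by
  have := eqv2.apply_symm_apply p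
  rw [eqv2_apply] at this
  exact congrArg Prod.fst this

lemma eqv2_symm_snd (p : ℝ × ℝ) : eqv2.symm p 1 = p.2 := by
  have := eqv2.apply_symm_apply p
  rw [eqv2_apply] at this
  exact congrArg Prod.snd this

noncomputable def gmap (w : SchwartzMap (ℝ × ℝ) ℂ) : SchwartzMap (EuclideanSpace ℝ (Fin 2)) ℂ :=
  SchwartzMap.fourierTransformCLM ℂ (SchwartzMap.compCLMOfContinuousLinearEquiv ℂ eqv2 w)

lemma ftransform_eq (w : SchwartzMap (ℝ × ℝ) ℂ) (ξ η : ℝ) :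
    ftransform (fun q => w q) ξ η
      = gmap w (eqv2.symm (ξ / (2 * Real.pi), η / (2 * Real.pi))) := by
  rw [gmap, SchwartzMap.fourierTransformCLM_apply, SchwartzMap.fourier_coe, Real.fourier_eq']
  rw [← MeasurePreserving.integral_comp (MeasurePreserving.symm em2 mp_em2)
      em2.symm.measurableEmbedding]
  unfold ftransform
  congr 1
  funext q
  rw [em2_symm_eq]
  have h0 := eqv2_symm_fst (ξ / (2 * Real.pi), η / (2 * Real.pi))
  have h1 := eqv2_symm_snd (ξ / (2 * Real.pi), η / (2 * Real.pi))
  have hW : (SchwartzMap.compCLMOfContinuousLinearEquiv ℂ eqv2 w) (eqv2.symm q) = w q := by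
    rw [SchwartzMap.compCLMOfContinuousLinearEquiv_apply]
    simp only [Function.comp_apply, ContinuousLinearEquiv.apply_symm_apply]
  rw [hW]
  have hinner : ⟪eqv2.symm q, eqv2.symm (ξ / (2 * Real.pi), η / (2 * Real.pi))⟫ =
      q.1 * (ξ / (2 * Real.pi)) + q.2 * (η / (2 * Real.pi)) := by
    rw [PiLp.inner_apply]
    simp [Fin.sum_univ_two, eqv2_symm_fst, eqv2_symm_snd, h0, h1]
    ring
  rw [hinner, smul_eq_mul]
  congr 1
  have hπ : (2 * Real.pi) ≠ 0 := by positivity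
  have : -2 * Real.pi * (q.1 * (ξ / (2 * Real.pi)) + q.2 * (η / (2 * Real.pi)))
      = -(q.1 * ξ + q.2 * η) := by field_simp
  rw [this]
  push_cast
  ring


lemma ftransform_continuous (w : SchwartzMap (ℝ × ℝ) ℂ) :
    Continuous fun p : ℝ × ℝ => ftransform (fun q => w q) p.1 p.2 := by
  have : (fun p : ℝ × ℝ => ftransform (fun q => w q) p.1 p.2)
      = fun p : ℝ × ℝ => gmap w (eqv2.symm (p.1 / (2 * Real.pi), p.2 / (2 * Real.pi))) := by
    funext p; exact ftransform_eq w p.1 p.2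
  rw [this]
  exact (gmap w).continuous.comp (eqv2.symm.continuous.comp (by fun_prop))

-- norm of eqv2 image is at most euclidean norm
lemma norm_eqv2_le (v : EuclideanSpace ℝ (Fin 2)) : ‖eqv2 v‖ ≤ ‖v‖ := by
  rw [eqv2_apply, Prod.norm_def]
  have h : ∀ i : Fin 2, ‖v i‖ ≤ ‖v‖ := fun i => by
    rw [EuclideanSpace.norm_eq]
    have h1 : ‖v i‖ ^ 2 ≤ ∑ j, ‖v j‖ ^ 2 :=
      Finset.single_le_sum (f := fun j => ‖v j‖ ^ 2) (fun j _ => sq_nonneg _) (Finset.mem_univ i)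
    calc ‖v i‖ = Real.sqrt (‖v i‖ ^ 2) := by rw [Real.sqrt_sq (norm_nonneg _)]
    _ ≤ _ := Real.sqrt_le_sqrt h1
  exact max_le (h 0) (h 1)

-- decay of ftransform
lemma ftransform_decay (w : SchwartzMap (ℝ × ℝ) ℂ) (k : ℕ) :
    ∃ C : ℝ, 0 ≤ C ∧ ∀ p : ℝ × ℝ,
      ‖ftransform (fun q => w q) p.1 p.2‖ ≤ C * (1 + ‖p‖) ^ (-(k : ℝ)) := by
  obtain ⟨C, hC⟩ : ∃ C : ℝ, ∀ v, (1 + ‖v‖) ^ k * ‖gmap w v‖ ≤ C := by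
    refine ⟨2 ^ k * (Finset.Iic ((k : ℕ), (0 : ℕ))).sup
        (fun m => SchwartzMap.seminorm ℝ m.1 m.2) (gmap w), fun v => ?_⟩
    have := SchwartzMap.one_add_le_sup_seminorm_apply (𝕜 := ℝ) (m := (k, 0)) (k := k) (n := 0)
      le_rfl le_rfl (gmap w) v
    simpa [norm_iteratedFDeriv_zero] using this
  have hC0 : 0 ≤ C := le_trans (by positivity) (hC 0)
  refine ⟨C * (2 * Real.pi) ^ k, by positivity, fun p => ?_⟩
  rw [ftransform_eq]
  set u := eqv2.symm (p.1 / (2 * Real.pi), p.2 / (2 * Real.pi)) with hu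
  have hπ : (1:ℝ) ≤ 2 * Real.pi := by nlinarith [Real.pi_gt_three]
  have hnorm : ‖p‖ / (2 * Real.pi) ≤ ‖u‖ := by
    have h1 : ‖eqv2 u‖ ≤ ‖u‖ := norm_eqv2_le u
    have h2 : eqv2 u = (p.1 / (2 * Real.pi), p.2 / (2 * Real.pi)) :=
      eqv2.apply_symm_apply _
    have h3 : ((p.1 / (2 * Real.pi), p.2 / (2 * Real.pi)) : ℝ × ℝ)
        = (2 * Real.pi)⁻¹ • p := by
      simp [Prod.smul_def, smul_eq_mul, div_eq_inv_mul]
      try constructor <;> rfl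
    have h4 : ‖((p.1 / (2 * Real.pi), p.2 / (2 * Real.pi)) : ℝ × ℝ)‖ = ‖p‖ / (2 * Real.pi) := by
      rw [h3, norm_smul, Real.norm_eq_abs, abs_of_pos (by positivity : (0:ℝ) < (2 * Real.pi)⁻¹)]
      rw [div_eq_inv_mul]
    rw [← h4, ← h2]; exact h1
  have key : (1 + ‖p‖) ^ k ≤ (2 * Real.pi) ^ k * (1 + ‖u‖) ^ k := by
    rw [← mul_pow]
    apply pow_le_pow_left₀ (by positivity)
    have : 1 + ‖p‖ ≤ 2 * Real.pi + ‖p‖ := by linarith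
    calc 1 + ‖p‖ ≤ 2 * Real.pi + ‖p‖ := this
      _ = 2 * Real.pi * (1 + ‖p‖ / (2 * Real.pi)) := by field_simp
      _ ≤ 2 * Real.pi * (1 + ‖u‖) := by
          apply mul_le_mul_of_nonneg_left _ (by positivity)
          linarith
  have hg : ‖gmap w u‖ ≤ C / (1 + ‖u‖) ^ k := by
    rw [le_div_iff₀ (by positivity)]
    calc ‖gmap w u‖ * (1 + ‖u‖) ^ k = (1 + ‖u‖) ^ k * ‖gmap w u‖ := by ring
      _ ≤ C := hC u
  calc ‖gmap w u‖ ≤ C / (1 + ‖u‖) ^ k := hg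
    _ ≤ C * (2 * Real.pi) ^ k / (1 + ‖p‖) ^ k := by
        rw [div_le_div_iff₀ (by positivity) (by positivity)]
        calc C * (1 + ‖p‖) ^ k ≤ C * ((2 * Real.pi) ^ k * (1 + ‖u‖) ^ k) :=
            mul_le_mul_of_nonneg_left key hC0
          _ = C * (2 * Real.pi) ^ k * (1 + ‖u‖) ^ k := by ring
    _ = C * (2 * Real.pi) ^ k * (1 + ‖p‖) ^ (-(k:ℝ)) := by
        rw [Real.rpow_neg (by positivity), Real.rpow_natCast]
        ring


lemma sobNormSq_lt_top (s₁ s₂ : ℝ) (hs₁ : 0 ≤ s₁) (hs₂ : 0 ≤ s₂)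
    (w : SchwartzMap (ℝ × ℝ) ℂ) : sobNormSq s₁ s₂ (fun q => w q) < ⊤ := by
  set k : ℕ := ⌈s₁ + s₂⌉₊ + 2 with hk
  obtain ⟨C, hC0, hC⟩ := ftransform_decay w k
  have hkk : s₁ + s₂ + 2 ≤ (k : ℝ) := by
    push_cast [hk]
    have := Nat.le_ceil (s₁ + s₂)
    linarith
  have hbound : ∀ p : ℝ × ℝ,
      (1 + p.1 ^ 2) ^ s₁ * (1 + p.2 ^ 2) ^ s₂ * ‖ftransform (fun q => w q) p.1 p.2‖ ^ 2
        ≤ C ^ 2 * (1 + ‖p‖) ^ (-(4:ℝ)) := by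
    intro p
    have hb : (0:ℝ) < 1 + ‖p‖ := by positivity
    have hb1 : (1:ℝ) ≤ 1 + ‖p‖ := by linarith [norm_nonneg p]
    -- weight bounds
    have h1 : (1 + p.1 ^ 2) ^ s₁ ≤ (1 + ‖p‖) ^ (2 * s₁) := by
      have : (1 + p.1 ^ 2) ≤ (1 + ‖p‖) ^ (2:ℕ) := by
        have hle : |p.1| ≤ ‖p‖ := by simpa using norm_fst_le p
        have h2 : p.1 ^ 2 ≤ ‖p‖ ^ 2 := by nlinarith [_root_.sq_abs p.1, abs_nonneg p.1]
        nlinarith [norm_nonneg p]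
      calc (1 + p.1 ^ 2) ^ s₁ ≤ ((1 + ‖p‖) ^ (2:ℕ)) ^ s₁ :=
          Real.rpow_le_rpow (by positivity) this hs₁
        _ = (1 + ‖p‖) ^ (2 * s₁) := by
          rw [← Real.rpow_natCast (1 + ‖p‖) 2, ← Real.rpow_mul hb.le]
          norm_num
    have h2 : (1 + p.2 ^ 2) ^ s₂ ≤ (1 + ‖p‖) ^ (2 * s₂) := by
      have : (1 + p.2 ^ 2) ≤ (1 + ‖p‖) ^ (2:ℕ) := by
        have hle : |p.2| ≤ ‖p‖ := by simpa using norm_snd_le p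
        have h2 : p.2 ^ 2 ≤ ‖p‖ ^ 2 := by nlinarith [_root_.sq_abs p.2, abs_nonneg p.2]
        nlinarith [norm_nonneg p]
      calc (1 + p.2 ^ 2) ^ s₂ ≤ ((1 + ‖p‖) ^ (2:ℕ)) ^ s₂ :=
          Real.rpow_le_rpow (by positivity) this hs₂
        _ = (1 + ‖p‖) ^ (2 * s₂) := by
          rw [← Real.rpow_natCast (1 + ‖p‖) 2, ← Real.rpow_mul hb.le]
          norm_num
    have h3 : ‖ftransform (fun q => w q) p.1 p.2‖ ^ 2
        ≤ C ^ 2 * (1 + ‖p‖) ^ (-(2 * (k:ℝ))) := by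
      have := hC p
      have hnn : (0:ℝ) ≤ ‖ftransform (fun q => w q) p.1 p.2‖ := norm_nonneg _
      calc ‖ftransform (fun q => w q) p.1 p.2‖ ^ 2
          ≤ (C * (1 + ‖p‖) ^ (-(k:ℝ))) ^ 2 := pow_le_pow_left₀ hnn this 2
        _ = C ^ 2 * (1 + ‖p‖) ^ (-(k:ℝ) * ((2:ℕ):ℝ)) := by
          rw [mul_pow, ← Real.rpow_natCast ((1 + ‖p‖) ^ (-(k:ℝ))) 2, ← Real.rpow_mul hb.le]
        _ = C ^ 2 * (1 + ‖p‖) ^ (-(2 * (k:ℝ))) := by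
          rw [show (-(k:ℝ) * ((2:ℕ):ℝ)) = -(2*(k:ℝ)) by push_cast; ring]
    calc (1 + p.1 ^ 2) ^ s₁ * (1 + p.2 ^ 2) ^ s₂ * ‖ftransform (fun q => w q) p.1 p.2‖ ^ 2
        ≤ (1 + ‖p‖) ^ (2 * s₁) * (1 + ‖p‖) ^ (2 * s₂) * (C ^ 2 * (1 + ‖p‖) ^ (-(2 * (k:ℝ)))) := by
          have hnn2 : (0:ℝ) ≤ (1 + p.1 ^ 2) ^ s₁ := Real.rpow_nonneg (by positivity) _
          have hnn3 : (0:ℝ) ≤ (1 + p.2 ^ 2) ^ s₂ := Real.rpow_nonneg (by positivity) _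
          have hnn4 : (0:ℝ) ≤ (1 + ‖p‖) ^ (2 * s₁) := Real.rpow_nonneg hb.le _
          have hnn5 : (0:ℝ) ≤ (1 + ‖p‖) ^ (2 * s₂) := Real.rpow_nonneg hb.le _
          have := sq_nonneg ‖ftransform (fun q => w q) p.1 p.2‖
          apply mul_le_mul (mul_le_mul h1 h2 hnn3 hnn4) h3 (by positivity) (by positivity)
      _ = C ^ 2 * ((1 + ‖p‖) ^ (2 * s₁) * (1 + ‖p‖) ^ (2 * s₂) * (1 + ‖p‖) ^ (-(2 * (k:ℝ)))) := by
          ring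
      _ = C ^ 2 * (1 + ‖p‖) ^ (2 * s₁ + 2 * s₂ + -(2 * (k:ℝ))) := by
          rw [← Real.rpow_add hb, ← Real.rpow_add hb]
      _ ≤ C ^ 2 * (1 + ‖p‖) ^ (-(4:ℝ)) := by
          apply mul_le_mul_of_nonneg_left _ (by positivity)
          apply Real.rpow_le_rpow_of_exponent_le hb1
          linarith
  have hint : Integrable (fun p : ℝ × ℝ => C ^ 2 * (1 + ‖p‖) ^ (-(4:ℝ))) := by
    apply Integrable.const_mul
    apply integrable_one_add_norm
    rw [show Module.finrank ℝ (ℝ × ℝ) = 2 by simp]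
    norm_num
  calc sobNormSq s₁ s₂ (fun q => w q)
      ≤ ∫⁻ p : ℝ × ℝ, ENNReal.ofReal (C ^ 2 * (1 + ‖p‖) ^ (-(4:ℝ))) := by
        unfold sobNormSq
        exact lintegral_mono fun p => ENNReal.ofReal_le_ofReal (hbound p)
    _ < ⊤ := hint.lintegral_lt_top


lemma smul_prod_smul (c₁ c₂ : ℝ≥0∞) (hc₂ : c₂ ≠ ⊤) :
    (c₁ • (volume : Measure ℝ)).prod (c₂ • (volume : Measure ℝ))
      = (c₁ * c₂) • ((volume : Measure ℝ).prod (volume : Measure ℝ)) := by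
  ext s hs
  rw [Measure.prod_apply hs, Measure.smul_apply, Measure.prod_apply hs, lintegral_smul_measure]
  simp only [Measure.smul_apply, smul_eq_mul]
  rw [lintegral_const_mul' _ _ hc₂, ← mul_assoc]

lemma map_scale {b1 b2 : ℝ} (h1 : 0 < b1) (h2 : 0 < b2) :
    Measure.map (fun q : ℝ × ℝ => (b1 * q.1, b2 * q.2)) volume
      = ENNReal.ofReal ((b1 * b2)⁻¹) • volume := by
  have heq : (fun q : ℝ × ℝ => (b1 * q.1, b2 * q.2))
      = Prod.map (fun x : ℝ => b1 * x) (fun y : ℝ => b2 * y) := rfl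
  rw [heq, Measure.volume_eq_prod, ← Measure.map_prod_map _ _ (measurable_const_mul b1)
    (measurable_const_mul b2), Real.map_volume_mul_left (ne_of_gt h1),
    Real.map_volume_mul_left (ne_of_gt h2),
    smul_prod_smul _ _ (by simp), ← ENNReal.ofReal_mul (by positivity), ← Measure.volume_eq_prod]
  congr 2
  rw [abs_of_pos (by positivity), abs_of_pos (by positivity), mul_inv]

lemma lintegral_scale (f : ℝ × ℝ → ℝ≥0∞) (hf : Measurable f) {b1 b2 : ℝ}
    (h1 : 0 < b1) (h2 : 0 < b2) :
    ∫⁻ q : ℝ × ℝ, f (b1 * q.1, b2 * q.2)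
      = ENNReal.ofReal ((b1 * b2)⁻¹) * ∫⁻ q : ℝ × ℝ, f q := by
  have hT : Measurable fun q : ℝ × ℝ => (b1 * q.1, b2 * q.2) := by fun_prop
  rw [← lintegral_map hf hT, map_scale h1 h2, lintegral_smul_measure, smul_eq_mul]

lemma integral_scale (F : ℝ × ℝ → ℂ) (hF : Continuous F) {b1 b2 : ℝ}
    (h1 : 0 < b1) (h2 : 0 < b2) :
    ∫ q : ℝ × ℝ, F (b1 * q.1, b2 * q.2)
      = ((b1 * b2)⁻¹ : ℝ) • ∫ q : ℝ × ℝ, F q := by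
  have hT : Measurable fun q : ℝ × ℝ => (b1 * q.1, b2 * q.2) := by fun_prop
  rw [← integral_map hT.aemeasurable (hF.aestronglyMeasurable), map_scale h1 h2,
    integral_smul_measure, ENNReal.toReal_ofReal (by positivity)]

lemma ft_rescale (w : SchwartzMap (ℝ × ℝ) ℂ) (c : ℝ) {b1 b2 : ℝ}
    (h1 : 0 < b1) (h2 : 0 < b2) (ξ η : ℝ) :
    ftransform (fun q => c • w (b1 * q.1, b2 * q.2)) ξ η
      = ((b1 * b2)⁻¹ * c) • ftransform (fun q => w q) (ξ / b1) (η / b2) := by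
  unfold ftransform
  have h : ∀ q : ℝ × ℝ, Complex.exp (-I * (q.1 * ξ + q.2 * η)) * (c • w (b1 * q.1, b2 * q.2))
      = c • ((fun p : ℝ × ℝ => Complex.exp (-I * (p.1 * (ξ / b1) + p.2 * (η / b2))) * w p)
          (b1 * q.1, b2 * q.2)) := by
    intro q
    simp only
    rw [mul_smul_comm]
    congr 2
    have hb1 : (b1:ℂ) ≠ 0 := Complex.ofReal_ne_zero.2 h1.ne'
    have hb2 : (b2:ℂ) ≠ 0 := Complex.ofReal_ne_zero.2 h2.ne'
    congr 1
    push_cast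
    field_simp
  simp_rw [h]
  rw [integral_smul]
  have hcont : Continuous fun p : ℝ × ℝ =>
      Complex.exp (-I * (p.1 * (ξ / b1) + p.2 * (η / b2))) * w p := by
    apply Continuous.mul _ w.continuous
    apply Complex.continuous_exp.comp
    fun_prop
  rw [integral_scale _ hcont h1 h2, smul_smul, mul_comm c]
  push_cast
  rfl


lemma pointwise_bound (s₁ s₂ : ℝ) (hs₁ : 0 ≤ s₁) (hs₂ : 0 ≤ s₂)
    (w : SchwartzMap (ℝ × ℝ) ℂ) (b c : ℝ) (hb1 : 1 ≤ b) (hcpos : 0 < c) (q : ℝ × ℝ) :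
    ENNReal.ofReal ((1 + q.1 ^ 2) ^ s₁ * (1 + q.2 ^ 2) ^ s₂ *
        ‖ftransform (fun p => c • w (b * p.1, b ^ 2 * p.2)) q.1 q.2‖ ^ 2)
      ≤ ENNReal.ofReal ((b ^ 2) ^ s₁ * ((b ^ 2) ^ 2) ^ s₂ * ((b * b ^ 2)⁻¹ * c) ^ 2) *
        ENNReal.ofReal ((1 + (b⁻¹ * q.1) ^ 2) ^ s₁ * (1 + ((b ^ 2)⁻¹ * q.2) ^ 2) ^ s₂ *
          ‖ftransform (fun p => w p) (b⁻¹ * q.1) ((b ^ 2)⁻¹ * q.2)‖ ^ 2) := by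
  have hb : (0:ℝ) < b := lt_of_lt_of_le one_pos hb1
  have hb2 : (0:ℝ) < b ^ 2 := by positivity
  have hrpos : (0:ℝ) < (b * b ^ 2)⁻¹ * c := by positivity
  have hMpos : (0:ℝ) < (b ^ 2) ^ s₁ * ((b ^ 2) ^ 2) ^ s₂ * ((b * b ^ 2)⁻¹ * c) ^ 2 := by
    positivity
  rw [ft_rescale w c hb hb2 q.1 q.2]
  rw [← ENNReal.ofReal_mul hMpos.le]
  apply ENNReal.ofReal_le_ofReal
  have hz : ftransform (fun p => w p) (q.1 / b) (q.2 / b ^ 2)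
      = ftransform (fun p => w p) (b⁻¹ * q.1) ((b ^ 2)⁻¹ * q.2) := by
    rw [div_eq_inv_mul, div_eq_inv_mul]
  rw [norm_smul, Real.norm_eq_abs, abs_of_pos hrpos, mul_pow, hz]
  set N : ℝ := ‖ftransform (fun p => w p) (b⁻¹ * q.1) ((b ^ 2)⁻¹ * q.2)‖ ^ 2 with hN
  have hNnn : 0 ≤ N := by positivity
  have hA : (1 + q.1 ^ 2) ^ s₁ ≤ (b ^ 2) ^ s₁ * (1 + (b⁻¹ * q.1) ^ 2) ^ s₁ := by
    rw [← Real.mul_rpow hb2.le (by positivity)]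
    apply Real.rpow_le_rpow (by positivity) _ hs₁
    have hx : b ^ 2 * (b⁻¹ * q.1) ^ 2 = q.1 ^ 2 := by field_simp
    nlinarith [sq_nonneg q.1]
  have hB : (1 + q.2 ^ 2) ^ s₂ ≤ ((b ^ 2) ^ 2) ^ s₂ * (1 + ((b ^ 2)⁻¹ * q.2) ^ 2) ^ s₂ := by
    rw [← Real.mul_rpow (by positivity) (by positivity)]
    apply Real.rpow_le_rpow (by positivity) _ hs₂
    have hx : (b ^ 2) ^ 2 * ((b ^ 2)⁻¹ * q.2) ^ 2 = q.2 ^ 2 := by field_simp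
    nlinarith [sq_nonneg q.2, sq_nonneg (b ^ 2), sq_nonneg ((b ^ 2) - 1), hb1]
  calc (1 + q.1 ^ 2) ^ s₁ * (1 + q.2 ^ 2) ^ s₂ * (((b * b ^ 2)⁻¹ * c) ^ 2 * N)
      ≤ ((b ^ 2) ^ s₁ * (1 + (b⁻¹ * q.1) ^ 2) ^ s₁) *
        (((b ^ 2) ^ 2) ^ s₂ * (1 + ((b ^ 2)⁻¹ * q.2) ^ 2) ^ s₂) *
        (((b * b ^ 2)⁻¹ * c) ^ 2 * N) := by
        have h2 : (0:ℝ) ≤ (1 + q.2 ^ 2) ^ s₂ := by positivity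
        have h3 : (0:ℝ) ≤ ((b * b ^ 2)⁻¹ * c) ^ 2 * N := by positivity
        have h4 : (0:ℝ) ≤ (b ^ 2) ^ s₁ * (1 + (b⁻¹ * q.1) ^ 2) ^ s₁ := by positivity
        exact mul_le_mul (mul_le_mul hA hB h2 h4) le_rfl h3 (by positivity)
    _ = ((b ^ 2) ^ s₁ * ((b ^ 2) ^ 2) ^ s₂ * ((b * b ^ 2)⁻¹ * c) ^ 2) *
        ((1 + (b⁻¹ * q.1) ^ 2) ^ s₁ * (1 + ((b ^ 2)⁻¹ * q.2) ^ 2) ^ s₂ * N) := by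
        ring

lemma exponent_eq (s₁ s₂ b c : ℝ) (hb : 0 < b) (hc : 0 ≤ c) :
    (b ^ 2) ^ s₁ * ((b ^ 2) ^ 2) ^ s₂ * ((b * b ^ 2)⁻¹ * c) ^ 2 * (b * b ^ 2)
      = (c * (b⁻¹) ^ (3 / 2 - s₁ - 2 * s₂)) ^ 2 := by
  set e : ℝ := 3 / 2 - s₁ - 2 * s₂ with he
  have e1 : ((b ^ 2 : ℝ)) ^ s₁ = b ^ (2 * s₁) := by
    rw [← Real.rpow_natCast b 2, ← Real.rpow_mul hb.le]; norm_num
  have e2 : (((b ^ 2 : ℝ)) ^ 2) ^ s₂ = b ^ (4 * s₂) := by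
    rw [show ((b ^ 2 : ℝ) ^ 2) = b ^ (4:ℕ) by ring, ← Real.rpow_natCast b 4,
      ← Real.rpow_mul hb.le]; norm_num
  have e3 : ((b * b ^ 2 : ℝ))⁻¹ = b ^ (-(3:ℝ)) := by
    rw [show (b * b ^ 2 : ℝ) = b ^ (3:ℕ) by ring, ← Real.rpow_natCast b 3,
      ← Real.rpow_neg hb.le]
    norm_num
  have e4 : (b * b ^ 2 : ℝ) = b ^ (3:ℝ) := by
    rw [show (b * b ^ 2 : ℝ) = b ^ (3:ℕ) by ring, ← Real.rpow_natCast b 3]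
    norm_num
  have e5 : (b⁻¹ : ℝ) ^ e = b ^ (-e) := by
    rw [← Real.rpow_neg_one b, ← Real.rpow_mul hb.le]; norm_num
  rw [e1, e2, e3, e5, mul_pow, mul_pow]
  rw [← Real.rpow_natCast (b ^ (-(3:ℝ))) 2, ← Real.rpow_mul hb.le]
  rw [← Real.rpow_natCast (b ^ (-e)) 2, ← Real.rpow_mul hb.le]
  rw [e4]
  calc b ^ (2 * s₁) * b ^ (4 * s₂) * (b ^ (-(3:ℝ) * ((2:ℕ):ℝ)) * c ^ 2) * b ^ (3:ℝ)
      = c ^ 2 * (b ^ (2 * s₁) * b ^ (4 * s₂) * b ^ (-(3:ℝ) * ((2:ℕ):ℝ)) * b ^ (3:ℝ)) := by ring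
    _ = c ^ 2 * b ^ (2 * s₁ + 4 * s₂ + -(3:ℝ) * ((2:ℕ):ℝ) + 3) := by
        rw [← Real.rpow_add hb, ← Real.rpow_add hb, ← Real.rpow_add hb]
    _ = c ^ 2 * b ^ (-e * ((2:ℕ):ℝ)) := by
        rw [show (2 * s₁ + 4 * s₂ + -(3:ℝ) * ((2:ℕ):ℝ) + 3) = -e * ((2:ℕ):ℝ) by
          rw [he]; push_cast; ring]
    _ = b ^ (-e * ((2:ℕ):ℝ)) * c ^ 2 := by ring
    _ = c ^ 2 * b ^ (-e * ((2:ℕ):ℝ)) := by ring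

end RescaledAux

open RescaledAux

/-- **Upper bound for anisotropically rescaled initial data.** -/
theorem rescaled_data_upper_bound (P s₁ s₂ : ℝ) (hP : 1 < P) (hs₁ : 0 ≤ s₁) (hs₂ : 0 ≤ s₂)
    (w : SchwartzMap (ℝ × ℝ) ℂ) :
    ∃ C > (0 : ℝ), ∀ a : ℝ, a ∈ Set.Icc (1 / 2 : ℝ) 1 →
      ∀ lam ν : ℝ, 0 < lam → lam ≤ ν →
      sobNorm s₁ s₂ (fun q => (a * lam ^ (-(2 / (P - 1))) : ℝ) •
          w (ν * q.1 / lam, ν ^ 2 * q.2 / lam ^ 2))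
        ≤ ENNReal.ofReal (C * lam ^ (-(2 / (P - 1))) *
            (lam / ν) ^ (3 / 2 - s₁ - 2 * s₂)) := by
  classical
  have hK : sobNormSq s₁ s₂ (fun q => w q) < ⊤ := sobNormSq_lt_top s₁ s₂ hs₁ hs₂ w
  obtain ⟨K, hKd⟩ : ∃ K : ℝ≥0∞, K = sobNormSq s₁ s₂ (fun q => w q) := ⟨_, rfl⟩
  rw [← hKd] at hK
  have hK2 : K ^ (1/2:ℝ) ≠ ⊤ := ENNReal.rpow_ne_top_of_nonneg (by norm_num) hK.ne
  set C0 : ℝ := (K ^ (1/2:ℝ)).toReal with hC0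
  have hC0nn : 0 ≤ C0 := ENNReal.toReal_nonneg
  refine ⟨C0 + 1, by positivity, ?_⟩
  intro a ha lam ν hlam hle
  set e : ℝ := 3 / 2 - s₁ - 2 * s₂ with he
  set b : ℝ := ν / lam with hbdef
  have hν : 0 < ν := lt_of_lt_of_le hlam hle
  have hb1 : 1 ≤ b := (one_le_div hlam).2 hle
  have hb : 0 < b := lt_of_lt_of_le one_pos hb1
  have hb2 : (0:ℝ) < b ^ 2 := by positivity
  set lp : ℝ := lam ^ (-(2 / (P - 1))) with hlp
  have hlppos : 0 < lp := Real.rpow_pos_of_pos hlam _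
  set c : ℝ := a * lp with hc
  have hapos : 0 < a := lt_of_lt_of_le (by norm_num) ha.1
  have hcpos : 0 < c := mul_pos hapos hlppos
  have hinv : lam / ν = b⁻¹ := by rw [hbdef, inv_div]
  have hfun : (fun q : ℝ × ℝ => (a * lam ^ (-(2 / (P - 1))) : ℝ) •
        w (ν * q.1 / lam, ν ^ 2 * q.2 / lam ^ 2))
      = fun q : ℝ × ℝ => c • w (b * q.1, b ^ 2 * q.2) := by
    funext q
    rw [hc, hlp]
    congr 1
    have h1 : ν * q.1 / lam = b * q.1 := by rw [hbdef]; field_simp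
    have h2 : ν ^ 2 * q.2 / lam ^ 2 = b ^ 2 * q.2 := by rw [hbdef]; field_simp
    rw [h1, h2]
  rw [hfun, hinv]
  obtain ⟨Fw, hFw⟩ : ∃ Fw : ℝ × ℝ → ℝ≥0∞, Fw = fun p => ENNReal.ofReal
      ((1 + p.1 ^ 2) ^ s₁ * (1 + p.2 ^ 2) ^ s₂ *
        ‖ftransform (fun q => w q) p.1 p.2‖ ^ 2) := ⟨_, rfl⟩
  have hFwm : Measurable Fw := by
    rw [hFw]
    have hcont : Continuous fun p : ℝ × ℝ =>
        (1 + p.1 ^ 2) ^ s₁ * (1 + p.2 ^ 2) ^ s₂ *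
          ‖ftransform (fun q => w q) p.1 p.2‖ ^ 2 := by
      apply Continuous.mul
      apply Continuous.mul
      · exact (continuous_const.add ((continuous_fst).pow 2)).rpow_const
          (fun x => Or.inr hs₁)
      · exact (continuous_const.add ((continuous_snd).pow 2)).rpow_const
          (fun x => Or.inr hs₂)
      · exact ((ftransform_continuous w).norm.pow 2)
    exact ENNReal.measurable_ofReal.comp hcont.measurable
  have hMpos : (0:ℝ) < (b ^ 2) ^ s₁ * ((b ^ 2) ^ 2) ^ s₂ * ((b * b ^ 2)⁻¹ * c) ^ 2 := by
    positivity
  have hpt : ∀ q : ℝ × ℝ, ENNReal.ofReal ((1 + q.1 ^ 2) ^ s₁ * (1 + q.2 ^ 2) ^ s₂ *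
        ‖ftransform (fun p => c • w (b * p.1, b ^ 2 * p.2)) q.1 q.2‖ ^ 2)
      ≤ ENNReal.ofReal ((b ^ 2) ^ s₁ * ((b ^ 2) ^ 2) ^ s₂ * ((b * b ^ 2)⁻¹ * c) ^ 2) *
        Fw (b⁻¹ * q.1, (b ^ 2)⁻¹ * q.2) := by
    intro q
    rw [hFw]
    exact pointwise_bound s₁ s₂ hs₁ hs₂ w b c hb1 hcpos q
  have hSS : sobNormSq s₁ s₂ (fun q => c • w (b * q.1, b ^ 2 * q.2))
      ≤ ENNReal.ofReal ((b ^ 2) ^ s₁ * ((b ^ 2) ^ 2) ^ s₂ * ((b * b ^ 2)⁻¹ * c) ^ 2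
          * (b * b ^ 2)) * K := by
    unfold sobNormSq
    calc ∫⁻ q : ℝ × ℝ, ENNReal.ofReal ((1 + q.1 ^ 2) ^ s₁ * (1 + q.2 ^ 2) ^ s₂ *
          ‖ftransform (fun p => c • w (b * p.1, b ^ 2 * p.2)) q.1 q.2‖ ^ 2)
        ≤ ∫⁻ q : ℝ × ℝ, ENNReal.ofReal ((b ^ 2) ^ s₁ * ((b ^ 2) ^ 2) ^ s₂ *
            ((b * b ^ 2)⁻¹ * c) ^ 2) * Fw (b⁻¹ * q.1, (b ^ 2)⁻¹ * q.2) :=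
          lintegral_mono hpt
      _ = ENNReal.ofReal ((b ^ 2) ^ s₁ * ((b ^ 2) ^ 2) ^ s₂ * ((b * b ^ 2)⁻¹ * c) ^ 2) *
            ∫⁻ q : ℝ × ℝ, Fw (b⁻¹ * q.1, (b ^ 2)⁻¹ * q.2) :=
          lintegral_const_mul' _ _ ENNReal.ofReal_ne_top
      _ = ENNReal.ofReal ((b ^ 2) ^ s₁ * ((b ^ 2) ^ 2) ^ s₂ * ((b * b ^ 2)⁻¹ * c) ^ 2) *
            (ENNReal.ofReal ((b⁻¹ * (b ^ 2)⁻¹)⁻¹) * ∫⁻ q : ℝ × ℝ, Fw q) := by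
          rw [lintegral_scale Fw hFwm (inv_pos.2 hb) (inv_pos.2 hb2)]
      _ = ENNReal.ofReal ((b ^ 2) ^ s₁ * ((b ^ 2) ^ 2) ^ s₂ * ((b * b ^ 2)⁻¹ * c) ^ 2
            * (b * b ^ 2)) * ∫⁻ q : ℝ × ℝ, Fw q := by
          rw [show ((b⁻¹ * (b ^ 2)⁻¹)⁻¹ : ℝ) = b * b ^ 2 by rw [mul_inv, inv_inv, inv_inv],
            ← mul_assoc, ← ENNReal.ofReal_mul hMpos.le]
      _ = ENNReal.ofReal ((b ^ 2) ^ s₁ * ((b ^ 2) ^ 2) ^ s₂ * ((b * b ^ 2)⁻¹ * c) ^ 2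
            * (b * b ^ 2)) * K := by
          rw [hKd, hFw]; rfl
  have hMb : ENNReal.ofReal ((b ^ 2) ^ s₁ * ((b ^ 2) ^ 2) ^ s₂ * ((b * b ^ 2)⁻¹ * c) ^ 2
        * (b * b ^ 2)) = ENNReal.ofReal ((c * (b⁻¹) ^ e) ^ 2) := by
    rw [he, exponent_eq s₁ s₂ b c hb hcpos.le]
  have hD : 0 < c * (b⁻¹) ^ e := by
    apply mul_pos hcpos
    apply Real.rpow_pos_of_pos
    positivity
  unfold sobNorm
  calc sobNormSq s₁ s₂ (fun q => c • w (b * q.1, b ^ 2 * q.2)) ^ (1/2:ℝ)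
      ≤ (ENNReal.ofReal ((c * (b⁻¹) ^ e) ^ 2) * K) ^ (1/2:ℝ) := by
        apply ENNReal.rpow_le_rpow _ (by norm_num)
        rw [← hMb]; exact hSS
    _ = ENNReal.ofReal ((c * (b⁻¹) ^ e) ^ 2) ^ (1/2:ℝ) * K ^ (1/2:ℝ) :=
        ENNReal.mul_rpow_of_nonneg _ _ (by norm_num)
    _ = ENNReal.ofReal (c * (b⁻¹) ^ e) * ENNReal.ofReal C0 := by
        rw [ENNReal.ofReal_rpow_of_nonneg (by positivity) (by norm_num)]
        rw [show (((c * (b⁻¹) ^ e) ^ 2 : ℝ) ^ (1/2:ℝ) : ℝ) = c * (b⁻¹) ^ e by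
          rw [← Real.rpow_natCast (c * (b⁻¹) ^ e) 2, ← Real.rpow_mul hD.le]
          norm_num]
        rw [hC0, ENNReal.ofReal_toReal hK2]
    _ = ENNReal.ofReal (c * (b⁻¹) ^ e * C0) := by
        rw [← ENNReal.ofReal_mul hD.le]
    _ ≤ ENNReal.ofReal ((C0 + 1) * lp * (b⁻¹) ^ e) := by
        apply ENNReal.ofReal_le_ofReal
        have hpe : (0:ℝ) < (b⁻¹) ^ e := Real.rpow_pos_of_pos (by positivity) _
        rw [hc]
        nlinarith [mul_pos hlppos hpe, mul_nonneg (mul_nonneg hlppos.le hpe.le) hC0nn,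
          ha.2, mul_le_of_le_one_left (mul_nonneg hlppos.le hpe.le) ha.2]
end

section
/- Lower bound for anisotropically rescaled functions (used in the norm inflation proof): Let p > 1, s₁ ≥ 0, s₂ ≥ 0, and let g be a Schwartz function on ℝ². There exists c > 0 (independent of g, λ, ν) such that for all λ, ν with 0 < λ ≤ ν, the function U(x,y) = λ^{−2/(p−1)} g(νx/λ, ν²y/λ²) satisfies ‖U‖²_{H^{s₁,s₂}} ≥ c λ^{−4/(p−1)} (λ/ν)^{3 − 2s₁ − 4s₂} ∫_{|ξ| ≥ 1, |η| ≥ 1} |ξ|^{2s₁} |η|^{2s₂} |ĝ(ξ,η)|² dξ dη. -/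
open MeasureTheory Complex
open scoped ENNReal NNReal

lemma smul_toNN {α : Type*} [MeasurableSpace α] (c : ℝ≥0∞) (hc : c ≠ ∞) (μ : Measure α) :
    c • μ = c.toNNReal • μ := by
  ext s _; simp [ENNReal.smul_def, ENNReal.coe_toNNReal hc]

lemma prod_smul_smul {α β : Type*} [MeasurableSpace α] [MeasurableSpace β]
    (c d : ℝ≥0∞) (hc : c ≠ ∞) (hd : d ≠ ∞) (μ : Measure α) (ν : Measure β)
    [SigmaFinite μ] [SigmaFinite ν] :
    (c • μ).prod (d • ν) = (c * d) • (μ.prod ν) := by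
  rw [smul_toNN c hc, smul_toNN d hd]
  ext s hs
  rw [Measure.prod_apply hs, Measure.smul_apply, Measure.prod_apply hs]
  simp only [Measure.smul_apply, ENNReal.smul_def, smul_eq_mul, lintegral_smul_measure]
  rw [lintegral_const_mul' _ _ ENNReal.coe_ne_top]
  rw [ENNReal.coe_toNNReal hc, ENNReal.coe_toNNReal hd]
  ring

noncomputable def scaleEquiv (a b : ℝ) (ha : a ≠ 0) (hb : b ≠ 0) : (ℝ × ℝ) ≃ᵐ (ℝ × ℝ) :=
  MeasurableEquiv.prodCongr (Homeomorph.mulLeft₀ a ha).toMeasurableEquiv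
    (Homeomorph.mulLeft₀ b hb).toMeasurableEquiv

lemma map_scale (a b : ℝ) (ha : a ≠ 0) (hb : b ≠ 0) :
    (volume : Measure (ℝ × ℝ)).map (scaleEquiv a b ha hb)
      = ENNReal.ofReal (|a⁻¹| * |b⁻¹|) • volume := by
  have hco : ⇑(scaleEquiv a b ha hb) = Prod.map (a * ·) (b * ·) := rfl
  rw [hco, Measure.volume_eq_prod, ← Measure.map_prod_map _ _ (measurable_const_mul a)
    (measurable_const_mul b), Real.map_volume_mul_left ha, Real.map_volume_mul_left hb,
    prod_smul_smul _ _ ENNReal.ofReal_ne_top ENNReal.ofReal_ne_top,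
    ← ENNReal.ofReal_mul (abs_nonneg _)]

lemma lintegral_scale (H : ℝ × ℝ → ℝ≥0∞) (a b : ℝ) (ha : a ≠ 0) (hb : b ≠ 0) :
    ∫⁻ q : ℝ × ℝ, H (a * q.1, b * q.2)
      = ENNReal.ofReal (|a⁻¹| * |b⁻¹|) * ∫⁻ q : ℝ × ℝ, H q := by
  have := lintegral_map_equiv (μ := (volume : Measure (ℝ × ℝ))) H (scaleEquiv a b ha hb)
  rw [map_scale a b ha hb, lintegral_smul_measure] at this
  simpa [scaleEquiv, MeasurableEquiv.prodCongr, Prod.map_def] using this.symm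

lemma integral_scale (F : ℝ × ℝ → ℂ) (a b : ℝ) (ha : a ≠ 0) (hb : b ≠ 0) :
    ∫ q : ℝ × ℝ, F (a * q.1, b * q.2)
      = (|a⁻¹| * |b⁻¹| : ℝ) • ∫ q : ℝ × ℝ, F q := by
  have := integral_map_equiv (μ := (volume : Measure (ℝ × ℝ))) (scaleEquiv a b ha hb) F
  rw [map_scale a b ha hb, integral_smul_measure,
    ENNReal.toReal_ofReal (by positivity)] at this
  simpa [scaleEquiv, MeasurableEquiv.prodCongr, Prod.map_def] using this.symm

lemma rpow_bound (a x s : ℝ) (ha : 0 < a) (hx : 1 ≤ |x|) (hs : 0 ≤ s) :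
    a ^ (2 * s) * |x| ^ (2 * s) ≤ (1 + (a * x) ^ 2) ^ s := by
  have h1 : a ^ (2 * s) * |x| ^ (2 * s) = ((a * x) ^ 2) ^ s := by
    rw [← Real.mul_rpow ha.le (abs_nonneg x),
      show (a * x) ^ 2 = (a * |x|) ^ 2 by rw [mul_pow, mul_pow, _root_.sq_abs],
      ← Real.rpow_natCast (a * |x|) 2, ← Real.rpow_mul (by positivity)]
    norm_num [mul_comm]
  rw [h1]
  exact Real.rpow_le_rpow (by positivity) (by nlinarith) hs

/-- **Lower bound for anisotropically rescaled functions.** -/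
theorem rescaled_lower_bound (P s₁ s₂ : ℝ) (hP : 1 < P) (hs₁ : 0 ≤ s₁) (hs₂ : 0 ≤ s₂) :
    ∃ c > (0 : ℝ), ∀ g : SchwartzMap (ℝ × ℝ) ℂ, ∀ lam ν : ℝ, 0 < lam → lam ≤ ν →
      ENNReal.ofReal (c * lam ^ (-(4 / (P - 1))) * (lam / ν) ^ (3 - 2 * s₁ - 4 * s₂)) *
        ∫⁻ q in {q : ℝ × ℝ | 1 ≤ |q.1| ∧ 1 ≤ |q.2|}, ENNReal.ofReal
          (|q.1| ^ (2 * s₁) * |q.2| ^ (2 * s₂) * ‖ftransform (⇑g) q.1 q.2‖ ^ 2)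
      ≤ sobNormSq s₁ s₂ (fun q => (lam ^ (-(2 / (P - 1))) : ℝ) •
          g (ν * q.1 / lam, ν ^ 2 * q.2 / lam ^ 2)) := by
  refine ⟨1, one_pos, ?_⟩
  intro g lam ν hlam hle
  have hν : 0 < ν := lt_of_lt_of_le hlam hle
  set a : ℝ := ν / lam with ha_def
  have ha : 0 < a := div_pos hν hlam
  have ha1 : 1 ≤ a := (one_le_div hlam).2 hle
  have hb : (0:ℝ) < a ^ 2 := by positivity
  set c₀ : ℝ := lam ^ (-(2 / (P - 1))) with hc₀_def
  have hc₀ : 0 < c₀ := Real.rpow_pos_of_pos hlam _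
  set C : ℝ := c₀ * (a * a ^ 2)⁻¹ with hC_def
  have hC : 0 < C := by positivity
  -- rewrite the rescaled function
  have hfun : (fun q : ℝ × ℝ => c₀ • g (ν * q.1 / lam, ν ^ 2 * q.2 / lam ^ 2))
      = fun q : ℝ × ℝ => c₀ • g (a * q.1, a ^ 2 * q.2) := by
    funext q
    have h1 : ν * q.1 / lam = a * q.1 := by rw [ha_def]; ring
    have h2 : ν ^ 2 * q.2 / lam ^ 2 = a ^ 2 * q.2 := by rw [ha_def]; ring
    rw [h1, h2]
  -- Fourier transform of the rescaled function
  have hft : ∀ ξ η : ℝ, ftransform (fun q : ℝ × ℝ => c₀ • g (a * q.1, a ^ 2 * q.2)) ξ η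
      = C • ftransform (⇑g) (ξ / a) (η / a ^ 2) := by
    intro ξ η
    have k1 : ∀ x : ℝ, a * x * (ξ / a) = x * ξ := fun x => by
      rw [show a * x * (ξ / a) = x * ξ * (a / a) by ring, div_self ha.ne', mul_one]
    have k2 : ∀ y : ℝ, a ^ 2 * y * (η / a ^ 2) = y * η := fun y => by
      rw [show a ^ 2 * y * (η / a ^ 2) = y * η * (a ^ 2 / a ^ 2) by ring,
        div_self hb.ne', mul_one]
    unfold ftransform
    have h1 : ∀ q : ℝ × ℝ,
        Complex.exp (-Complex.I * (q.1 * ξ + q.2 * η)) * (c₀ • g (a * q.1, a ^ 2 * q.2))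
        = c₀ • ((fun r : ℝ × ℝ => Complex.exp (-Complex.I * ((r.1 : ℂ) * ((ξ / a : ℝ) : ℂ)
            + (r.2 : ℂ) * ((η / a ^ 2 : ℝ) : ℂ))) * g r) (a * q.1, a ^ 2 * q.2)) := by
      intro q
      show Complex.exp (-Complex.I * (q.1 * ξ + q.2 * η)) * (c₀ • g (a * q.1, a ^ 2 * q.2))
        = c₀ • (Complex.exp (-Complex.I * (((a * q.1 : ℝ) : ℂ) * ((ξ / a : ℝ) : ℂ)
            + ((a ^ 2 * q.2 : ℝ) : ℂ) * ((η / a ^ 2 : ℝ) : ℂ))) * g (a * q.1, a ^ 2 * q.2))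
      rw [mul_smul_comm]
      congr 2
      simp only [← Complex.ofReal_mul]
      rw [k1 q.1, k2 q.2]
    rw [integral_congr_ae (ae_of_all _ h1), integral_smul,
      integral_scale (fun r : ℝ × ℝ => Complex.exp (-Complex.I * ((r.1 : ℂ) * ((ξ / a : ℝ) : ℂ)
        + (r.2 : ℂ) * ((η / a ^ 2 : ℝ) : ℂ))) * g r) a (a ^ 2) ha.ne' hb.ne', smul_smul]
    congr 1
    rw [abs_of_pos (inv_pos.2 ha), abs_of_pos (inv_pos.2 hb), hC_def, mul_inv]
  have hnorm : ∀ q : ℝ × ℝ,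
      ‖ftransform (fun q : ℝ × ℝ => c₀ • g (a * q.1, a ^ 2 * q.2)) q.1 q.2‖ ^ 2
      = C ^ 2 * ‖ftransform (⇑g) (q.1 / a) (q.2 / a ^ 2)‖ ^ 2 := by
    intro q
    rw [hft q.1 q.2, norm_smul, Real.norm_eq_abs, abs_of_pos hC, mul_pow]
  set H : ℝ × ℝ → ℝ≥0∞ := fun q => ENNReal.ofReal
    ((1 + q.1 ^ 2) ^ s₁ * (1 + q.2 ^ 2) ^ s₂ *
      (C ^ 2 * ‖ftransform (⇑g) (q.1 / a) (q.2 / a ^ 2)‖ ^ 2)) with hH_def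
  have hsob : sobNormSq s₁ s₂ (fun q : ℝ × ℝ => c₀ • g (a * q.1, a ^ 2 * q.2))
      = ∫⁻ q : ℝ × ℝ, H q := by
    unfold sobNormSq
    rw [hH_def]
    simp only [hnorm]
  have hscale : (∫⁻ q : ℝ × ℝ, H q)
      = ENNReal.ofReal (a * a ^ 2) * ∫⁻ q : ℝ × ℝ, H (a * q.1, a ^ 2 * q.2) := by
    rw [lintegral_scale H a (a ^ 2) ha.ne' hb.ne', ← mul_assoc,
      ← ENNReal.ofReal_mul (by positivity), abs_of_pos (inv_pos.2 ha),
      abs_of_pos (inv_pos.2 hb),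
      show (a * a ^ 2) * (a⁻¹ * (a ^ 2)⁻¹) = 1 by field_simp,
      ENNReal.ofReal_one, one_mul]
  have hHeval : ∀ q : ℝ × ℝ, H (a * q.1, a ^ 2 * q.2) = ENNReal.ofReal
      ((1 + (a * q.1) ^ 2) ^ s₁ * (1 + (a ^ 2 * q.2) ^ 2) ^ s₂ *
        (C ^ 2 * ‖ftransform (⇑g) q.1 q.2‖ ^ 2)) := by
    intro q
    rw [hH_def]
    simp only
    rw [mul_div_cancel_left₀ _ ha.ne', mul_div_cancel_left₀ _ hb.ne']
  set K₁ : ℝ := C ^ 2 * a ^ (2 * s₁) * (a ^ 2) ^ (2 * s₂) with hK₁_def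
  have hK₁ : 0 < K₁ := by positivity
  have hS : MeasurableSet {q : ℝ × ℝ | 1 ≤ |q.1| ∧ 1 ≤ |q.2|} :=
    (measurableSet_le measurable_const measurable_fst.abs).inter
      (measurableSet_le measurable_const measurable_snd.abs)
  have hpt : ∀ q ∈ {q : ℝ × ℝ | 1 ≤ |q.1| ∧ 1 ≤ |q.2|}, ENNReal.ofReal
      (K₁ * (|q.1| ^ (2 * s₁) * |q.2| ^ (2 * s₂) * ‖ftransform (⇑g) q.1 q.2‖ ^ 2))
      ≤ H (a * q.1, a ^ 2 * q.2) := by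
    intro q hq
    rw [hHeval q]
    apply ENNReal.ofReal_le_ofReal
    have b1 := rpow_bound a q.1 s₁ ha hq.1 hs₁
    have b2 := rpow_bound (a ^ 2) q.2 s₂ hb hq.2 hs₂
    calc K₁ * (|q.1| ^ (2 * s₁) * |q.2| ^ (2 * s₂) * ‖ftransform (⇑g) q.1 q.2‖ ^ 2)
        = ((a ^ (2 * s₁) * |q.1| ^ (2 * s₁)) * ((a ^ 2) ^ (2 * s₂) * |q.2| ^ (2 * s₂)))
            * (C ^ 2 * ‖ftransform (⇑g) q.1 q.2‖ ^ 2) := by rw [hK₁_def]; ring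
      _ ≤ ((1 + (a * q.1) ^ 2) ^ s₁ * (1 + (a ^ 2 * q.2) ^ 2) ^ s₂)
            * (C ^ 2 * ‖ftransform (⇑g) q.1 q.2‖ ^ 2) := by
          apply mul_le_mul_of_nonneg_right _ (by positivity)
          exact mul_le_mul b1 b2 (by positivity) (by positivity)
      _ = (1 + (a * q.1) ^ 2) ^ s₁ * (1 + (a ^ 2 * q.2) ^ 2) ^ s₂
            * (C ^ 2 * ‖ftransform (⇑g) q.1 q.2‖ ^ 2) := by ring
  -- the constant identity
  have e3 : a * a ^ 2 = a ^ (3 : ℝ) := by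
    rw [show (3 : ℝ) = ((3 : ℕ) : ℝ) by norm_num, Real.rpow_natCast]; ring
  have h2 : c₀ ^ 2 = lam ^ (-(4 / (P - 1))) := by
    rw [hc₀_def, ← Real.rpow_natCast (lam ^ (-(2 / (P - 1)))) 2, ← Real.rpow_mul hlam.le]
    congr 1; push_cast; ring
  have h4 : (a ^ 2) ^ (2 * s₂) = a ^ (4 * s₂) := by
    rw [← Real.rpow_natCast a 2, ← Real.rpow_mul ha.le]
    congr 1; push_cast; ring
  have h5 : (lam / ν) ^ (3 - 2 * s₁ - 4 * s₂) = a ^ (2 * s₁ + 4 * s₂ - 3) := by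
    rw [show lam / ν = a⁻¹ by rw [ha_def, inv_div], Real.inv_rpow ha.le,
      ← Real.rpow_neg ha.le]
    congr 1; ring
  have hsplit : a ^ (2 * s₁ + 4 * s₂ - 3)
      = a ^ (2 * s₁) * a ^ (4 * s₂) * (a * a ^ 2)⁻¹ := by
    rw [show (2 * s₁ + 4 * s₂ - 3 : ℝ) = 2 * s₁ + (4 * s₂ + (-3)) by ring,
      Real.rpow_add ha, Real.rpow_add ha, Real.rpow_neg ha.le, ← e3, ← mul_assoc]
  have hconst : 1 * lam ^ (-(4 / (P - 1))) * (lam / ν) ^ (3 - 2 * s₁ - 4 * s₂)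
      = (a * a ^ 2) * K₁ := by
    rw [one_mul, ← h2, h5, hsplit, hK₁_def, hC_def, mul_pow, h4]
    field_simp
  rw [hfun, hsob, hscale, hconst, ENNReal.ofReal_mul (by positivity), mul_assoc]
  refine mul_le_mul_right ?_ _
  calc ENNReal.ofReal K₁ * ∫⁻ q in {q : ℝ × ℝ | 1 ≤ |q.1| ∧ 1 ≤ |q.2|}, ENNReal.ofReal
        (|q.1| ^ (2 * s₁) * |q.2| ^ (2 * s₂) * ‖ftransform (⇑g) q.1 q.2‖ ^ 2)
      = ∫⁻ q in {q : ℝ × ℝ | 1 ≤ |q.1| ∧ 1 ≤ |q.2|}, ENNReal.ofReal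
        (K₁ * (|q.1| ^ (2 * s₁) * |q.2| ^ (2 * s₂) * ‖ftransform (⇑g) q.1 q.2‖ ^ 2)) := by
        rw [← lintegral_const_mul' _ _ ENNReal.ofReal_ne_top]
        exact lintegral_congr fun q => (ENNReal.ofReal_mul hK₁.le).symm
    _ ≤ ∫⁻ q in {q : ℝ × ℝ | 1 ≤ |q.1| ∧ 1 ≤ |q.2|}, H (a * q.1, a ^ 2 * q.2) :=
        setLIntegral_mono' hS hpt
    _ ≤ ∫⁻ q : ℝ × ℝ, H (a * q.1, a ^ 2 * q.2) := setLIntegral_le_lintegral _ _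
end

section
/- Derivative bounds for the power nonlinearity: Let p ≥ 3 be an odd integer, μ = 1 or μ = −1, and let F : ℂ → ℂ be defined by F(z) = μ|z|^{p−1}z, regarded as a smooth map between ℂ viewed as a 2-dimensional real vector space. Then for every j ∈ ℕ there exists C_j > 0 such that for all z, w ∈ ℂ: (i) ‖D^j F(z)‖ ≤ C_j (1 + |z|)^{p−j}, and (ii) ‖D^j F(z + w) − D^j F(z)‖ ≤ C_j |w| (1 + |z| + |w|)^{p−j−1}, where D^j F denotes the j-th iterated Fréchet derivative of F over ℝ and ‖·‖ its operator norm. -/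
open Complex Finset

/-- Second and higher iterated derivatives of a continuous linear map vanish. -/
lemma clm_iteratedFDeriv_ge_two (L : ℂ →L[ℝ] ℂ) {i : ℕ} (hi : 2 ≤ i) (z : ℂ) :
    iteratedFDeriv ℝ i (fun x => L x) z = 0 := by
  obtain ⟨n, rfl⟩ : ∃ n, i = n + 1 + 1 := ⟨i - 2, by omega⟩
  have hconst : (fderiv ℝ fun x : ℂ => L x) = fun _ => L := by
    funext x; exact L.fderiv
  rw [← norm_eq_zero, ← norm_iteratedFDeriv_fderiv, hconst,
    iteratedFDeriv_const_of_ne (by omega : n + 1 ≠ 0)]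
  simp

/-- The first iterated derivative of a continuous linear map has norm `‖L‖`. -/
lemma clm_iteratedFDeriv_one (L : ℂ →L[ℝ] ℂ) (z : ℂ) :
    ‖iteratedFDeriv ℝ 1 (fun x => L x) z‖ = ‖L‖ := by
  rw [show (1 : ℕ) = 0 + 1 from rfl, ← norm_iteratedFDeriv_fderiv,
    norm_iteratedFDeriv_zero]
  rw [L.fderiv]

lemma monomial_contDiff (a b : ℕ) (n : WithTop ℕ∞) :
    ContDiff ℝ n fun z : ℂ => z ^ a * (starRingEnd ℂ) z ^ b := by
  have hconj : ContDiff ℝ n fun z : ℂ => (starRingEnd ℂ) z :=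
    Complex.conjCLE.toContinuousLinearMap.contDiff
  exact (contDiff_id.pow a).mul (hconj.pow b)

/-- Key step lemma: multiplying by a linear factor. -/
lemma step_aux (L : ℂ →L[ℝ] ℂ) (hL : ‖L‖ ≤ 1) (hLz : ∀ z : ℂ, ‖L z‖ ≤ ‖z‖)
    (g : ℂ → ℂ) (hg : ∀ n : WithTop ℕ∞, ContDiff ℝ n g) (q : ℕ)
    (hvan : ∀ j, q < j → ∀ z : ℂ, iteratedFDeriv ℝ j g z = 0)
    (hbd : ∀ j : ℕ, ∃ C > (0 : ℝ), ∀ z : ℂ,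
      ‖iteratedFDeriv ℝ j g z‖ ≤ C * (1 + ‖z‖) ^ (q - j)) :
    (∀ j, q + 1 < j → ∀ z : ℂ, iteratedFDeriv ℝ j (fun z => L z * g z) z = 0) ∧
    (∀ j : ℕ, ∃ C > (0 : ℝ), ∀ z : ℂ,
      ‖iteratedFDeriv ℝ j (fun z => L z * g z) z‖ ≤ C * (1 + ‖z‖) ^ (q + 1 - j)) := by
  constructor
  · intro j hj z
    have h := norm_iteratedFDeriv_mul_le (𝕜 := ℝ) (N := (j : WithTop ℕ∞))
      (L.contDiff) (hg j) z le_rfl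
    refine norm_le_zero_iff.mp (h.trans_eq (Finset.sum_eq_zero ?_))
    intro i hi
    rcases lt_or_ge i 2 with h2 | h2
    · have : q < j - i := by omega
      rw [hvan _ this z]
      simp
    · rw [clm_iteratedFDeriv_ge_two L h2 z]
      simp
  · intro j
    obtain ⟨C1, hC1pos, hC1⟩ := hbd j
    obtain ⟨C0, hC0pos, hC0⟩ := hbd (j - 1)
    refine ⟨C1 + j * C0, by positivity, fun z => ?_⟩
    have h := norm_iteratedFDeriv_mul_le (𝕜 := ℝ) (N := (j : WithTop ℕ∞))
      (L.contDiff) (hg j) z le_rfl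
    set X : ℝ := 1 + ‖z‖ with hX
    have hX0 : (0 : ℝ) ≤ X := by positivity
    have hX1 : ‖z‖ ≤ X := by rw [hX]; linarith [norm_nonneg z]
    have key : ∀ i ∈ Finset.range (j + 1),
        (j.choose i : ℝ) * ‖iteratedFDeriv ℝ i (fun x => L x) z‖ *
          ‖iteratedFDeriv ℝ (j - i) g z‖ ≤
        ((if i = 0 then C1 else 0) + (if i = 1 then (j : ℝ) * C0 else 0)) *
          X ^ (q + 1 - j) := by
      intro i hi
      have hij : i ≤ j := by
        simp only [Finset.mem_range] at hi; omega
      split_ifs with hi0 hi1 hi1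
      · exfalso; omega
      · subst hi0
        simp only [Nat.choose_zero_right, Nat.cast_one, one_mul, Nat.sub_zero,
          norm_iteratedFDeriv_zero]
        rcases le_or_gt j q with hjq | hjq
        · have h1 : ‖L z‖ * ‖iteratedFDeriv ℝ j g z‖ ≤ X * (C1 * X ^ (q - j)) :=
            mul_le_mul ((hLz z).trans hX1) (hC1 z) (norm_nonneg _) hX0
          have h2' : X * (C1 * X ^ (q - j)) = C1 * X ^ (q + 1 - j) := by
            rw [show q + 1 - j = (q - j) + 1 by omega, pow_succ]
            ring
          linarith
        · rw [hvan j hjq z]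
          simp only [norm_zero, mul_zero]
          nlinarith [pow_nonneg hX0 (q + 1 - j), hC1pos]
      · subst hi1
        have hj1 : 1 ≤ j := hij
        simp only [Nat.choose_one_right, clm_iteratedFDeriv_one]
        rcases le_or_gt (j - 1) q with hjq | hjq
        · have h1 : ‖iteratedFDeriv ℝ (j - 1) g z‖ ≤ C0 * X ^ (q + 1 - j) := by
            have := hC0 z
            rwa [show q - (j - 1) = q + 1 - j by omega] at this
          calc (j : ℝ) * ‖L‖ * ‖iteratedFDeriv ℝ (j - 1) g z‖
              ≤ (j : ℝ) * 1 * (C0 * X ^ (q + 1 - j)) := by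
                apply mul_le_mul (mul_le_mul_of_nonneg_left hL (Nat.cast_nonneg j)) h1
                  (norm_nonneg _) (by positivity)
            _ = (0 + (j : ℝ) * C0) * X ^ (q + 1 - j) := by ring
        · rw [hvan (j - 1) hjq z]
          simp only [norm_zero, mul_zero]
          nlinarith [pow_nonneg hX0 (q + 1 - j),
            mul_nonneg (Nat.cast_nonneg (α := ℝ) j) hC0pos.le]
      · have h2 : 2 ≤ i := by omega
        rw [clm_iteratedFDeriv_ge_two L h2 z]
        simp only [norm_zero, mul_zero, zero_mul]
        norm_num
    have hsum := Finset.sum_le_sum key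
    have e0 : (∑ i ∈ Finset.range (j + 1), (if i = 0 then C1 else (0 : ℝ))) = C1 := by
      rw [Finset.sum_ite_eq' (Finset.range (j + 1)) 0 (fun _ => C1)]
      simp
    have e1 : (∑ i ∈ Finset.range (j + 1), (if i = 1 then (j : ℝ) * C0 else 0))
        ≤ (j : ℝ) * C0 := by
      rw [Finset.sum_ite_eq' (Finset.range (j + 1)) 1 (fun _ => (j : ℝ) * C0)]
      split_ifs
      · exact le_rfl
      · positivity
    have htotal : (∑ i ∈ Finset.range (j + 1),
        ((if i = 0 then C1 else 0) + (if i = 1 then (j : ℝ) * C0 else 0)) *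
          X ^ (q + 1 - j)) ≤ (C1 + (j : ℝ) * C0) * X ^ (q + 1 - j) := by
      rw [← Finset.sum_mul, Finset.sum_add_distrib, e0]
      have : C1 + (∑ i ∈ Finset.range (j + 1), (if i = 1 then (j : ℝ) * C0 else 0))
          ≤ C1 + (j : ℝ) * C0 := by linarith
      exact mul_le_mul_of_nonneg_right this (by positivity)
    exact h.trans (hsum.trans htotal)

/-- Master lemma: vanishing and polynomial bounds for iterated derivatives of
`z ^ a * conj z ^ b`. -/
lemma master : ∀ q a b : ℕ, a + b = q →
    (∀ j, q < j → ∀ z : ℂ,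
      iteratedFDeriv ℝ j (fun z : ℂ => z ^ a * (starRingEnd ℂ) z ^ b) z = 0) ∧
    (∀ j : ℕ, ∃ C > (0 : ℝ), ∀ z : ℂ,
      ‖iteratedFDeriv ℝ j (fun z : ℂ => z ^ a * (starRingEnd ℂ) z ^ b) z‖
        ≤ C * (1 + ‖z‖) ^ (q - j)) := by
  intro q
  induction q with
  | zero =>
    intro a b hab
    obtain ⟨rfl, rfl⟩ : a = 0 ∧ b = 0 := by omega
    have hf : (fun z : ℂ => z ^ 0 * (starRingEnd ℂ) z ^ 0) = fun _ => (1 : ℂ) := by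
      funext z; simp
    rw [hf]
    constructor
    · intro j hj z
      rw [iteratedFDeriv_const_of_ne (by omega : j ≠ 0)]
      simp
    · intro j
      refine ⟨1, one_pos, fun z => ?_⟩
      rcases Nat.eq_zero_or_pos j with rfl | hj
      · simp [norm_iteratedFDeriv_zero]
      · rw [iteratedFDeriv_const_of_ne (by omega : j ≠ 0)]
        simp
  | succ q IH =>
    intro a b hab
    rcases Nat.eq_zero_or_pos a with rfl | ha
    · -- a = 0, b = q + 1
      obtain ⟨b', rfl⟩ : ∃ b', b = b' + 1 := ⟨b - 1, by omega⟩
      have hb' : 0 + b' = q := by omega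
      have hIH := IH 0 b' hb'
      set L : ℂ →L[ℝ] ℂ := Complex.conjCLE.toContinuousLinearMap with hLdef
      have hLnorm : ‖L‖ ≤ 1 := by
        apply ContinuousLinearMap.opNorm_le_bound _ zero_le_one
        intro z
        simp [hLdef]
      have hLz : ∀ z : ℂ, ‖L z‖ ≤ ‖z‖ := by
        intro z; simp [hLdef]
      have hfeq : (fun z : ℂ => z ^ 0 * (starRingEnd ℂ) z ^ (b' + 1)) =
          fun z : ℂ => L z * (z ^ 0 * (starRingEnd ℂ) z ^ b') := by
        funext z
        simp only [pow_zero, one_mul, pow_succ, hLdef]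
        have : (L z : ℂ) = (starRingEnd ℂ) z := rfl
        rw [this]; ring
      rw [hfeq]
      exact step_aux L hLnorm hLz _ (fun n => monomial_contDiff 0 b' n) q hIH.1 hIH.2
    · -- a > 0
      obtain ⟨a', rfl⟩ : ∃ a', a = a' + 1 := ⟨a - 1, by omega⟩
      have ha' : a' + b = q := by omega
      have hIH := IH a' b ha'
      set L : ℂ →L[ℝ] ℂ := ContinuousLinearMap.id ℝ ℂ with hLdef
      have hLnorm : ‖L‖ ≤ 1 := ContinuousLinearMap.norm_id_le
      have hLz : ∀ z : ℂ, ‖L z‖ ≤ ‖z‖ := fun z => le_rfl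
      have hfeq : (fun z : ℂ => z ^ (a' + 1) * (starRingEnd ℂ) z ^ b) =
          fun z : ℂ => L z * (z ^ a' * (starRingEnd ℂ) z ^ b) := by
        funext z
        simp only [pow_succ, hLdef, ContinuousLinearMap.id_apply]
        ring
      rw [hfeq]
      exact step_aux L hLnorm hLz _ (fun n => monomial_contDiff a' b n) q hIH.1 hIH.2

/-- **Derivative bounds for the power nonlinearity** `F(z) = μ|z|^{p−1}z`. -/
theorem power_nonlinearity_derivative_bounds (p : ℕ) (hp : Odd p) (hp3 : 3 ≤ p)
    (μ : ℝ) (hμ : μ = 1 ∨ μ = -1) (j : ℕ) :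
    ∃ C > (0 : ℝ), ∀ z w : ℂ,
      ‖iteratedFDeriv ℝ j (fun z : ℂ => (μ : ℂ) * (‖z‖ ^ (p - 1) : ℝ) * z) z‖
        ≤ C * (1 + ‖z‖) ^ ((p : ℝ) - j) ∧
      ‖iteratedFDeriv ℝ j (fun z : ℂ => (μ : ℂ) * (‖z‖ ^ (p - 1) : ℝ) * z) (z + w) -
          iteratedFDeriv ℝ j (fun z : ℂ => (μ : ℂ) * (‖z‖ ^ (p - 1) : ℝ) * z) z‖
        ≤ C * ‖w‖ * (1 + ‖z‖ + ‖w‖) ^ ((p : ℝ) - j - 1) := by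
  obtain ⟨k, hk⟩ := hp
  have habs : |μ| = 1 := by rcases hμ with rfl | rfl <;> norm_num
  set g : ℂ → ℂ := fun z : ℂ => z ^ (k + 1) * (starRingEnd ℂ) z ^ k with hgdef
  have hFeq : (fun z : ℂ => (μ : ℂ) * (‖z‖ ^ (p - 1) : ℝ) * z) = fun z => μ • g z := by
    funext z
    have h2 : ((‖z‖ : ℂ)) ^ 2 = z * (starRingEnd ℂ) z := by
      rw [Complex.mul_conj]
      norm_cast
      rw [← Complex.sq_norm]
    have h1 : ((‖z‖ ^ (p - 1) : ℝ) : ℂ) = z ^ k * (starRingEnd ℂ) z ^ k := by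
      push_cast
      rw [show p - 1 = 2 * k by omega, pow_mul, h2, mul_pow]
    rw [Complex.real_smul, hgdef, h1]
    ring
  rw [hFeq]
  have hg : ∀ n : WithTop ℕ∞, ContDiff ℝ n g := fun n => monomial_contDiff (k + 1) k n
  have hm := master p (k + 1) k (by omega)
  obtain ⟨hvan, hbd⟩ := hm
  obtain ⟨Cj, hCjpos, hCj⟩ := hbd j
  obtain ⟨Cj1, hCj1pos, hCj1⟩ := hbd (j + 1)
  set C : ℝ := Cj + Cj1 with hCdef
  have hCpos : 0 < C := by positivity
  have hsmul : ∀ (i : ℕ) (z : ℂ),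
      iteratedFDeriv ℝ i (fun z => μ • g z) z = μ • iteratedFDeriv ℝ i g z :=
    fun i z => iteratedFDeriv_const_smul_apply' (hg i).contDiffAt
  refine ⟨C, hCpos, fun z w => ?_⟩
  have hnorm : ∀ (i : ℕ) (z : ℂ),
      ‖iteratedFDeriv ℝ i (fun z => μ • g z) z‖ = ‖iteratedFDeriv ℝ i g z‖ := by
    intro i z
    rw [hsmul i z]
    rcases hμ with rfl | rfl
    · rw [one_smul]
    · rw [neg_smul, one_smul, norm_neg]
  constructor
  · -- part (i)
    rw [hnorm j z]
    rcases le_or_gt j p with hjp | hjp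
    · have hb := hCj z
      have hconv : ((1 : ℝ) + ‖z‖) ^ (p - j : ℕ) = (1 + ‖z‖) ^ ((p : ℝ) - j) := by
        rw [← Real.rpow_natCast (1 + ‖z‖) (p - j), Nat.cast_sub hjp]
      rw [hconv] at hb
      refine hb.trans ?_
      have hnn : (0 : ℝ) ≤ (1 + ‖z‖) ^ ((p : ℝ) - j) :=
        (Real.rpow_pos_of_pos (by positivity) _).le
      have hCge : Cj ≤ C := by rw [hCdef]; linarith
      exact mul_le_mul_of_nonneg_right hCge hnn
    · rw [hvan j hjp z]
      simp only [norm_zero]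
      exact (mul_pos hCpos (Real.rpow_pos_of_pos (by positivity) _)).le
  · -- part (ii)
    rw [hsmul j (z + w), hsmul j z, ← smul_sub]
    have hms : ‖μ • (iteratedFDeriv ℝ j g (z + w) - iteratedFDeriv ℝ j g z)‖
        = ‖iteratedFDeriv ℝ j g (z + w) - iteratedFDeriv ℝ j g z‖ := by
      rcases hμ with rfl | rfl
      · rw [one_smul]
      · rw [neg_smul, one_smul, norm_neg]
    rw [hms]
    have hdiff : ∀ x : ℂ, DifferentiableAt ℝ (iteratedFDeriv ℝ j g) x := by
      have := (hg ((j : ℕ) + 1 : ℕ)).differentiable_iteratedFDeriv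
        (by exact_mod_cast Nat.lt_succ_self j)
      exact fun x => this x
    rcases le_or_gt (j + 1) p with hjp | hjp
    · -- mean value with polynomial bound
      have hbound : ∀ x ∈ segment ℝ z (z + w),
          ‖fderiv ℝ (iteratedFDeriv ℝ j g) x‖ ≤ Cj1 * (1 + ‖z‖ + ‖w‖) ^ (p - (j + 1)) := by
        intro x hx
        have hxn : ‖x‖ ≤ ‖z‖ + ‖w‖ := by
          obtain ⟨t, s, ht, hs, hts, rfl⟩ := hx
          have heq : t • z + s • (z + w) = z + s • w := by
            rw [smul_add, ← add_assoc, ← add_smul, hts, one_smul]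
          rw [heq]
          calc ‖z + s • w‖ ≤ ‖z‖ + ‖s • w‖ := norm_add_le _ _
            _ = ‖z‖ + s * ‖w‖ := by rw [norm_smul, Real.norm_of_nonneg hs]
            _ ≤ ‖z‖ + 1 * ‖w‖ := by
                have hs1 : s ≤ 1 := by linarith
                have := norm_nonneg w
                nlinarith
            _ = ‖z‖ + ‖w‖ := by ring
        rw [norm_fderiv_iteratedFDeriv]
        refine (hCj1 x).trans ?_
        apply mul_le_mul_of_nonneg_left _ hCj1pos.le
        apply pow_le_pow_left₀ (by positivity)
        linarith
      have mv := Convex.norm_image_sub_le_of_norm_fderiv_le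
        (fun x _ => hdiff x) hbound (convex_segment z (z + w))
        (left_mem_segment ℝ z (z + w)) (right_mem_segment ℝ z (z + w))
      rw [add_sub_cancel_left] at mv
      have hexp : (p : ℝ) - j - 1 = ((p - (j + 1) : ℕ) : ℝ) := by
        rw [Nat.cast_sub hjp]; push_cast; ring
      rw [hexp, Real.rpow_natCast]
      refine mv.trans ?_
      have hCge' : Cj1 ≤ C := by rw [hCdef]; linarith
      have hr : (0 : ℝ) ≤ (1 + ‖z‖ + ‖w‖) ^ (p - (j + 1) : ℕ) := by positivity
      have hw := norm_nonneg w
      calc Cj1 * (1 + ‖z‖ + ‖w‖) ^ (p - (j + 1) : ℕ) * ‖w‖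
          = Cj1 * ‖w‖ * (1 + ‖z‖ + ‖w‖) ^ (p - (j + 1) : ℕ) := by ring
        _ ≤ C * ‖w‖ * (1 + ‖z‖ + ‖w‖) ^ (p - (j + 1) : ℕ) :=
            mul_le_mul_of_nonneg_right (mul_le_mul_of_nonneg_right hCge' hw) hr
    · -- j + 1 > p : the (j+1)-st derivative vanishes, so the difference is zero
      have hbound : ∀ x ∈ segment ℝ z (z + w),
          ‖fderiv ℝ (iteratedFDeriv ℝ j g) x‖ ≤ 0 := by
        intro x _
        rw [norm_fderiv_iteratedFDeriv, hvan (j + 1) hjp x, norm_zero]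
      have mv := Convex.norm_image_sub_le_of_norm_fderiv_le
        (fun x _ => hdiff x) hbound (convex_segment z (z + w))
        (left_mem_segment ℝ z (z + w)) (right_mem_segment ℝ z (z + w))
      rw [zero_mul] at mv
      refine mv.trans ?_
      have hr : (0 : ℝ) ≤ (1 + ‖z‖ + ‖w‖) ^ ((p : ℝ) - j - 1) :=
        (Real.rpow_pos_of_pos (by positivity) _).le
      positivity
end

section
/- L² phase decoherence of the dispersionless solutions: Let p > 1, μ = 1 or μ = −1, and let w be a nonzero Schwartz function on ℝ². Then there exists C > 0 such that for all a, a' ∈ [1/2, 1] with a ≠ a' and all t ≥ C|a − a'|^{−1}, ‖a w e^{−iμt a^{p−1}|w|^{p−1}} − a' w e^{−iμt (a')^{p−1}|w|^{p−1}}‖_{L²(ℝ²)} ≥ 1/C. -/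
open MeasureTheory Set
open scoped ENNReal NNReal

lemma normSq_exp_sub_one (s : ℝ) :
    ‖Complex.exp ((s:ℂ) * Complex.I) - 1‖^2 = 2 - 2*Real.cos s := by
  rw [Complex.sq_norm, Complex.normSq_apply]
  simp [Complex.exp_mul_I, ← Complex.ofReal_cos, ← Complex.ofReal_sin]
  nlinarith [Real.sin_sq_add_cos_sq s]

lemma pointwise_lower (a a' α β : ℝ) (ha : a ∈ Set.Icc (1/2:ℝ) 1) (ha' : a' ∈ Set.Icc (1/2:ℝ) 1) :
    (1/2) * ‖Complex.exp (((α - β : ℝ):ℂ) * Complex.I) - 1‖ ≤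
      ‖(a:ℂ) * Complex.exp ((α:ℂ) * Complex.I) - (a':ℂ) * Complex.exp ((β:ℂ) * Complex.I)‖ := by
  obtain ⟨ha1, ha2⟩ := ha; obtain ⟨hb1, hb2⟩ := ha'
  apply le_of_pow_le_pow_left₀ two_ne_zero (norm_nonneg _)
  rw [mul_pow, normSq_exp_sub_one]
  rw [Complex.sq_norm, Complex.normSq_apply]
  simp [Complex.exp_mul_I, ← Complex.ofReal_cos, ← Complex.ofReal_sin]
  have hc := Real.cos_sub α β
  have h1 := Real.sin_sq_add_cos_sq α
  have h2 := Real.sin_sq_add_cos_sq β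
  have hcb : Real.cos (α - β) ≤ 1 := Real.cos_le_one (α - β)
  have expand : (a * Real.cos α - a' * Real.cos β) * (a * Real.cos α - a' * Real.cos β) +
      (a * Real.sin α - a' * Real.sin β) * (a * Real.sin α - a' * Real.sin β)
      = a^2 + a'^2 - 2*a*a'*Real.cos (α - β) := by
    rw [hc]; linear_combination a^2*h1 + a'^2*h2
  rw [expand]
  nlinarith [mul_nonneg (by nlinarith : (0:ℝ) ≤ 2*a*a' - 1/2)
    (by nlinarith : (0:ℝ) ≤ 1 - Real.cos (α - β)), sq_nonneg (a - a')]
lemma osc_bound {α β θ m A A₁ M₂ : ℝ} (hαβ : α ≤ β) (hm : 0 < m) (hθ : θ ≠ 0)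
    {ψ ψ' u u' u'' : ℝ → ℝ}
    (hψ : ∀ y ∈ Icc α β, HasDerivAt ψ (ψ' y) y)
    (hu : ∀ y ∈ Icc α β, HasDerivAt u (u' y) y)
    (hu' : ∀ y ∈ Icc α β, HasDerivAt u' (u'' y) y)
    (hcψ' : ContinuousOn ψ' (Icc α β))
    (hcu'' : ContinuousOn u'' (Icc α β))
    (hA : ∀ y ∈ Icc α β, |ψ y| ≤ A)
    (hA₁ : ∀ y ∈ Icc α β, |ψ' y| ≤ A₁)
    (hmu : ∀ y ∈ Icc α β, m ≤ |u' y|)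
    (hM₂ : ∀ y ∈ Icc α β, |u'' y| ≤ M₂) :
    |∫ y in α..β, ψ y * Real.cos (θ * u y)| ≤
      (2*A/m + (β - α)*(A₁/m + A*M₂/m^2)) / |θ| := by
  have huIcc : uIcc α β = Icc α β := uIcc_of_le hαβ
  have hne : ∀ y ∈ Icc α β, u' y ≠ 0 := fun y hy => by
    have := hmu y hy; intro h; rw [h] at this; simp at this; linarith
  -- continuity facts
  have hcψ : ContinuousOn ψ (Icc α β) := fun y hy => ((hψ y hy).continuousAt).continuousWithinAt
  have hcu : ContinuousOn u (Icc α β) := fun y hy => ((hu y hy).continuousAt).continuousWithinAt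
  have hcu' : ContinuousOn u' (Icc α β) := fun y hy => ((hu' y hy).continuousAt).continuousWithinAt
  set Φ : ℝ → ℝ := fun y => ψ y / u' y with hΦdef
  set Φ' : ℝ → ℝ := fun y => ψ' y / u' y - ψ y * u'' y / (u' y)^2 with hΦ'def
  set V : ℝ → ℝ := fun y => Real.sin (θ * u y) / θ with hVdef
  set V' : ℝ → ℝ := fun y => u' y * Real.cos (θ * u y) with hV'def
  have hΦ : ∀ y ∈ Icc α β, HasDerivAt Φ (Φ' y) y := by
    intro y hy
    have h : HasDerivAt Φ _ y := (hψ y hy).div (hu' y hy) (hne y hy)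
    convert h using 1
    show ψ' y / u' y - ψ y * u'' y / (u' y)^2 = (ψ' y * u' y - ψ y * u'' y) / u' y ^ 2
    rw [div_sub_div _ _ (hne y hy) (pow_ne_zero 2 (hne y hy)),
      div_eq_div_iff (mul_ne_zero (hne y hy) (pow_ne_zero 2 (hne y hy))) (pow_ne_zero 2 (hne y hy))]
    ring
  have hV : ∀ y ∈ Icc α β, HasDerivAt V (V' y) y := by
    intro y hy
    have h1 : HasDerivAt (fun y => θ * u y) (θ * u' y) y := (hu y hy).const_mul θ
    have h2 : HasDerivAt (fun y => Real.sin (θ * u y)) (Real.cos (θ * u y) * (θ * u' y)) y :=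
      h1.sin
    have h3 : HasDerivAt V _ y := h2.div_const θ
    convert h3 using 1
    show u' y * Real.cos (θ * u y) = _
    rw [mul_div_assoc, mul_div_cancel_left₀ _ hθ]
    ring
  have hint : ∫ y in α..β, ψ y * Real.cos (θ * u y) = ∫ y in α..β, Φ y * V' y := by
    apply intervalIntegral.integral_congr
    intro y hy
    rw [huIcc] at hy
    simp only [hΦdef, hV'def]
    field_simp [hne y hy]
  have hΦ'int : IntervalIntegrable Φ' volume α β := by
    apply ContinuousOn.intervalIntegrable
    rw [huIcc]
    exact ((hcψ'.div hcu' hne).sub ((hcψ.mul hcu'').div (hcu'.pow 2)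
      (fun y hy => pow_ne_zero 2 (hne y hy))))
  have hV'int : IntervalIntegrable V' volume α β := by
    apply ContinuousOn.intervalIntegrable
    rw [huIcc]
    exact hcu'.mul (Real.continuous_cos.comp_continuousOn (continuousOn_const.mul hcu))
  have ibp := intervalIntegral.integral_mul_deriv_eq_deriv_mul
    (fun y hy => hΦ y (huIcc ▸ hy)) (fun y hy => hV y (huIcc ▸ hy)) hΦ'int hV'int
  rw [hint, ibp]
  have hαI : α ∈ Icc α β := ⟨le_refl _, hαβ⟩
  have hβI : β ∈ Icc α β := ⟨hαβ, le_refl _⟩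
  have hA0 : 0 ≤ A := le_trans (abs_nonneg _) (hA α hαI)
  have hM0 : 0 ≤ M₂ := le_trans (abs_nonneg _) (hM₂ α hαI)
  have hA₁0 : 0 ≤ A₁ := le_trans (abs_nonneg _) (hA₁ α hαI)
  have hsum0 : 0 ≤ A₁/m + A*M₂/m^2 := add_nonneg (div_nonneg hA₁0 hm.le)
    (div_nonneg (mul_nonneg hA0 hM0) (by positivity))
  have hΦb : ∀ y ∈ Icc α β, |Φ y| ≤ A / m := by
    intro y hy
    rw [abs_div]
    exact div_le_div₀ (by exact hA0) (hA y hy) hm (hmu y hy)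
  have hVb : ∀ y ∈ Icc α β, |V y| ≤ 1 / |θ| := by
    intro y hy
    rw [hVdef]
    simp only [abs_div]
    apply div_le_div₀ (by positivity) (Real.abs_sin_le_one _) (abs_pos.mpr hθ) (le_refl _)
  have hΦ'b : ∀ y ∈ Icc α β, |Φ' y| ≤ A₁/m + A*M₂/m^2 := by
    intro y hy
    refine le_trans (abs_sub _ _) ?_
    gcongr
    · rw [abs_div]
      exact div_le_div₀ (le_trans (abs_nonneg _) (hA₁ y hy)) (hA₁ y hy) hm (hmu y hy)
    · rw [abs_div, abs_mul, abs_pow]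
      apply div_le_div₀ (mul_nonneg hA0 hM0) ?_ (by positivity) ?_
      · exact mul_le_mul (hA y hy) (hM₂ y hy) (abs_nonneg _) hA0
      · exact pow_le_pow_left₀ (le_of_lt hm) (hmu y hy) 2 |>.trans_eq rfl
  -- bound the remaining integral
  have hrem : |∫ y in α..β, Φ' y * V y| ≤ ((A₁/m + A*M₂/m^2) * (1/|θ|)) * |β - α| := by
    rw [← Real.norm_eq_abs]
    apply intervalIntegral.norm_integral_le_of_norm_le_const
    intro y hy
    have hy' : y ∈ Icc α β := by
      rw [uIoc_of_le hαβ] at hy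
      exact ⟨le_of_lt hy.1, hy.2⟩
    rw [Real.norm_eq_abs, abs_mul]
    exact mul_le_mul (hΦ'b y hy') (hVb y hy') (abs_nonneg _) hsum0
  have h1 : |Φ β * V β| ≤ (A/m) * (1/|θ|) :=
    (abs_mul _ _).le.trans (mul_le_mul (hΦb β hβI) (hVb β hβI) (abs_nonneg _) (by positivity))
  have h2 : |Φ α * V α| ≤ (A/m) * (1/|θ|) :=
    (abs_mul _ _).le.trans (mul_le_mul (hΦb α hαI) (hVb α hαI) (abs_nonneg _) (by positivity))
  have habs : |β - α| = β - α := abs_of_nonneg (by linarith)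
  calc |Φ β * V β - Φ α * V α - ∫ y in α..β, Φ' y * V y|
      ≤ |Φ β * V β| + |Φ α * V α| + |∫ y in α..β, Φ' y * V y| := by
        refine le_trans (abs_sub _ _) ?_
        gcongr
        exact abs_sub _ _
    _ ≤ (A/m) * (1/|θ|) + (A/m) * (1/|θ|) + ((A₁/m + A*M₂/m^2) * (1/|θ|)) * |β - α| := by
        gcongr
    _ = (2*A/m + (β - α)*(A₁/m + A*M₂/m^2)) / |θ| := by
        rw [habs]; field_simp; ring
lemma key_osc (G : ℝ×ℝ → ℝ) (hG : ContDiff ℝ (⊤:ℕ∞) G) (hG0 : ∀ z, 0 ≤ G z)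
    (hGi : Integrable G) (q : ℝ) (hq : 0 < q) (z₀ : ℝ×ℝ)
    (hd : fderiv ℝ G z₀ (0,1) ≠ 0) :
    ∃ θ₀ > (0:ℝ), ∃ δ > (0:ℝ), ∀ θ : ℝ, θ₀ ≤ |θ| →
      δ ≤ ∫ z, G z * (1 - Real.cos (θ * G z ^ q)) := by
  have hGdiff : Differentiable ℝ G := hG.differentiable (by simp)
  have hGcont : Continuous G := hG.continuous
  -- derivative functions
  set Gy : ℝ×ℝ → ℝ := fun z => fderiv ℝ G z ((0:ℝ),(1:ℝ)) with hGydef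
  have hGysmooth : ContDiff ℝ (⊤:ℕ∞) Gy :=
    ((ContinuousLinearMap.apply ℝ ℝ ((0:ℝ),(1:ℝ))).contDiff).comp
      (hG.fderiv_right (m := (⊤:ℕ∞)) (le_refl _))
  have hGycont : Continuous Gy := hGysmooth.continuous
  have hGydiff : Differentiable ℝ Gy := hGysmooth.differentiable (by simp)
  set Gyy : ℝ×ℝ → ℝ := fun z => fderiv ℝ Gy z ((0:ℝ),(1:ℝ)) with hGyydef
  have hGyycont : Continuous Gyy :=
    ((ContinuousLinearMap.apply ℝ ℝ ((0:ℝ),(1:ℝ))).continuous).comp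
      ((hGysmooth.fderiv_right (m := (⊤:ℕ∞)) (le_refl _)).continuous)
  -- the slice derivative fact
  have line : ∀ (F : ℝ×ℝ → ℝ), Differentiable ℝ F → ∀ (x y : ℝ),
      HasDerivAt (fun s => F (x, s)) (fderiv ℝ F (x,y) (0,1)) y := by
    intro F hF x y
    have hl : HasDerivAt (fun s => ((x, s) : ℝ×ℝ)) ((0:ℝ),(1:ℝ)) y :=
      (hasDerivAt_const y x).prodMk (hasDerivAt_id y)
    exact (hF (x,y)).hasFDerivAt.comp_hasDerivAt y hl
  -- positivity at z₀
  have hGz₀ : 0 < G z₀ := by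
    rcases lt_or_eq_of_le (hG0 z₀) with h | h
    · exact h
    · exfalso
      have hmin : IsLocalMin G z₀ := Filter.Eventually.of_forall (fun z => by rw [← h]; exact hG0 z)
      exact hd (by rw [hmin.fderiv_eq_zero]; rfl)
  have hGyz₀ : 0 < |Gy z₀| := abs_pos.mpr hd
  set ρ₀ : ℝ := G z₀ / 2 with hρ₀def
  set m₀ : ℝ := |Gy z₀| / 2 with hm₀def
  have hρ₀ : 0 < ρ₀ := by positivity
  have hm₀ : 0 < m₀ := by positivity
  -- neighborhood where G > ρ₀ and |Gy| > m₀
  have hVopen : IsOpen {z : ℝ×ℝ | ρ₀ < G z ∧ m₀ < |Gy z|} :=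
    (isOpen_lt continuous_const hGcont).inter (isOpen_lt continuous_const hGycont.abs)
  have hz₀V : z₀ ∈ {z : ℝ×ℝ | ρ₀ < G z ∧ m₀ < |Gy z|} := by
    constructor
    · rw [hρ₀def]; linarith
    · rw [hm₀def]; linarith
  obtain ⟨ε, hε, hball⟩ := Metric.isOpen_iff.mp hVopen z₀ hz₀V
  set r : ℝ := ε / 4 with hrdef
  have hr : 0 < r := by positivity
  set S : Set (ℝ×ℝ) := Icc (z₀.1 - r) (z₀.1 + r) ×ˢ Icc (z₀.2 - r) (z₀.2 + r) with hSdef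
  have hSsub : S ⊆ {z : ℝ×ℝ | ρ₀ < G z ∧ m₀ < |Gy z|} := by
    intro z hz
    apply hball
    obtain ⟨⟨h1, h2⟩, ⟨h3, h4⟩⟩ := hz
    rw [Metric.mem_ball, Prod.dist_eq, Real.dist_eq, Real.dist_eq]
    apply max_lt <;> rw [abs_lt] <;> constructor <;> nlinarith
  have hSG : ∀ z ∈ S, ρ₀ < G z := fun z hz => (hSsub hz).1
  have hSGy : ∀ z ∈ S, m₀ < |Gy z| := fun z hz => (hSsub hz).2
  have hSGne : ∀ z ∈ S, G z ≠ 0 := fun z hz => ne_of_gt (lt_trans hρ₀ (hSG z hz))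
  have hScomp : IsCompact S := isCompact_Icc.prod isCompact_Icc
  have hz₀S : z₀ ∈ S := by
    constructor <;> constructor <;> simp <;> linarith
  have hSne : S.Nonempty := ⟨z₀, hz₀S⟩
  have hSmeas : MeasurableSet S := (measurableSet_Icc).prod measurableSet_Icc
  -- derivative formula functions
  set U' : ℝ×ℝ → ℝ := fun z => Gy z * q * G z ^ (q - 1) with hU'def
  set U'' : ℝ×ℝ → ℝ := fun z =>
    Gyy z * q * G z ^ (q-1) + Gy z * q * (Gy z * (q-1) * G z ^ (q-1-1)) with hU''def
  have hU'contS : ContinuousOn U' S := by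
    apply ContinuousOn.mul (ContinuousOn.mul hGycont.continuousOn continuousOn_const)
    exact ContinuousOn.rpow_const hGcont.continuousOn (fun z hz => Or.inl (hSGne z hz))
  have hU''contS : ContinuousOn U'' S := by
    apply ContinuousOn.add
    · exact (hGyycont.continuousOn.mul continuousOn_const).mul
        (ContinuousOn.rpow_const hGcont.continuousOn (fun z hz => Or.inl (hSGne z hz)))
    · exact (hGycont.continuousOn.mul continuousOn_const).mul
        ((hGycont.continuousOn.mul continuousOn_const).mul
          (ContinuousOn.rpow_const hGcont.continuousOn (fun z hz => Or.inl (hSGne z hz))))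
  -- bounds by compactness
  obtain ⟨A, hA⟩ := hScomp.exists_bound_of_continuousOn hGcont.continuousOn
  obtain ⟨A₁, hA₁⟩ := hScomp.exists_bound_of_continuousOn hGycont.continuousOn
  obtain ⟨M₂, hM₂⟩ := hScomp.exists_bound_of_continuousOn hU''contS
  obtain ⟨zm, hzmS, hzmin⟩ := hScomp.exists_isMinOn hSne (hU'contS.norm)
  set m : ℝ := ‖U' zm‖ with hmdef
  have hm : 0 < m := by
    rw [hmdef, hU'def]
    simp only [Real.norm_eq_abs]
    rw [abs_mul, abs_mul]
    have h1 : 0 < |Gy zm| := lt_trans hm₀ (hSGy zm hzmS)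
    have h2 : 0 < |G zm ^ (q-1)| := abs_pos.mpr (ne_of_gt (Real.rpow_pos_of_pos (lt_trans hρ₀ (hSG zm hzmS)) _))
    have h3 : (0:ℝ) < |q| := abs_pos.mpr (ne_of_gt hq)
    positivity
  have hmle : ∀ z ∈ S, m ≤ |U' z| := by
    intro z hz
    have := hzmin hz
    simpa [Real.norm_eq_abs, hmdef] using this
  have hA0 : 0 ≤ A := le_trans (norm_nonneg _) (hA z₀ hz₀S)
  have hA₁0 : 0 ≤ A₁ := le_trans (norm_nonneg _) (hA₁ z₀ hz₀S)
  have hM₂0 : 0 ≤ M₂ := le_trans (norm_nonneg _) (hM₂ z₀ hz₀S)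
  set K : ℝ := 2*A/m + (2*r)*(A₁/m + A*M₂/m^2) with hKdef
  have hK0 : 0 ≤ K := by
    rw [hKdef]; positivity
  set δ : ℝ := ρ₀ * ((2*r) * (2*r)) / 2 with hδdef
  have hδ : 0 < δ := by positivity
  refine ⟨max 1 ((2*r) * K / δ), lt_of_lt_of_le one_pos (le_max_left _ _), δ, hδ, ?_⟩
  intro θ hθ
  have hθ1 : (1:ℝ) ≤ |θ| := le_trans (le_max_left _ _) hθ
  have hθne : θ ≠ 0 := by
    intro h; rw [h] at hθ1; simp at hθ1; linarith
  -- integrand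
  set W : ℝ×ℝ → ℝ := fun z => G z * (1 - Real.cos (θ * G z ^ q)) with hWdef
  set cosW : ℝ×ℝ → ℝ := fun z => G z * Real.cos (θ * G z ^ q) with hcosWdef
  have hGqcont : Continuous (fun z : ℝ×ℝ => G z ^ q) :=
    hGcont.rpow_const (fun z => Or.inr hq.le)
  have hcosWcont : Continuous cosW :=
    hGcont.mul (Real.continuous_cos.comp (continuous_const.mul hGqcont))
  have hWcont : Continuous W :=
    hGcont.mul (continuous_const.sub (Real.continuous_cos.comp (continuous_const.mul hGqcont)))
  have hW0 : ∀ z, 0 ≤ W z := fun z =>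
    mul_nonneg (hG0 z) (sub_nonneg.mpr (Real.cos_le_one _))
  have hWint : Integrable W := by
    apply Integrable.mono (hGi.const_mul 2) hWcont.aestronglyMeasurable
    apply Filter.Eventually.of_forall
    intro z
    rw [Real.norm_eq_abs, Real.norm_eq_abs, abs_of_nonneg (hW0 z), hWdef]
    have h1 : 1 - Real.cos (θ * G z ^ q) ≤ 2 := by
      have := Real.neg_one_le_cos (θ * G z ^ q)
      linarith
    have := hG0 z
    calc G z * (1 - Real.cos (θ * G z ^ q)) ≤ G z * 2 := by nlinarith
      _ ≤ |2 * G z| := by rw [abs_of_nonneg (by linarith)]; ring_nf; exact le_refl _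
  -- restrict to S
  have hstep1 : ∫ z in S, W z ≤ ∫ z, W z :=
    setIntegral_le_integral hWint (Filter.Eventually.of_forall hW0)
  -- split
  have hGS_int : IntegrableOn G S := hGi.integrableOn
  have hcosWS_int : IntegrableOn cosW S := hcosWcont.continuousOn.integrableOn_compact hScomp
  have hsplit : ∫ z in S, W z = (∫ z in S, G z) - ∫ z in S, cosW z := by
    rw [← integral_sub hGS_int hcosWS_int]
    apply setIntegral_congr_fun hSmeas
    intro z _
    rw [hWdef, hcosWdef]
    ring
  -- lower bound for ∫_S G
  have hvolS : (volume S).toReal = (2*r) * (2*r) := by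
    rw [hSdef, Measure.volume_eq_prod, Measure.prod_prod, Real.volume_Icc, Real.volume_Icc]
    rw [show z₀.1 + r - (z₀.1 - r) = 2*r by ring, show z₀.2 + r - (z₀.2 - r) = 2*r by ring]
    rw [ENNReal.toReal_mul, ENNReal.toReal_ofReal (by linarith)]
  have hSGlow : ρ₀ * ((2*r) * (2*r)) ≤ ∫ z in S, G z := by
    have h := setIntegral_mono_on (integrableOn_const (LT.lt.ne ?_)) hGS_int hSmeas
      (fun z hz => (hSG z hz).le)
    · rw [setIntegral_const] at h
      rw [smul_eq_mul] at h
      calc ρ₀ * ((2*r) * (2*r)) = (volume S).toReal * ρ₀ := by rw [hvolS]; ring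
        _ ≤ ∫ z in S, G z := h
    · rw [hSdef, Measure.volume_eq_prod, Measure.prod_prod]
      exact ENNReal.mul_lt_top (by rw [Real.volume_Icc]; exact ENNReal.ofReal_lt_top)
        (by rw [Real.volume_Icc]; exact ENNReal.ofReal_lt_top)
  -- Fubini and inner bound
  have hvolI : volume (Icc (z₀.1 - r) (z₀.1 + r)) < ⊤ := by
    rw [Real.volume_Icc]; exact ENNReal.ofReal_lt_top
  have hfub : ∫ z in S, cosW z =
      ∫ x in Icc (z₀.1 - r) (z₀.1 + r), ∫ y in Icc (z₀.2 - r) (z₀.2 + r), cosW (x, y) := by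
    rw [hSdef]
    rw [show (volume : Measure (ℝ×ℝ)) = (volume : Measure ℝ).prod (volume : Measure ℝ) from
      Measure.volume_eq_prod ℝ ℝ] at hcosWS_int ⊢
    exact MeasureTheory.setIntegral_prod cosW hcosWS_int
  have hinner : ∀ x ∈ Icc (z₀.1 - r) (z₀.1 + r),
      ‖∫ y in Icc (z₀.2 - r) (z₀.2 + r), cosW (x, y)‖ ≤ K / |θ| := by
    intro x hx
    have hle : z₀.2 - r ≤ z₀.2 + r := by linarith
    rw [MeasureTheory.integral_Icc_eq_integral_Ioc,
      ← intervalIntegral.integral_of_le hle]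
    have hmem : ∀ y ∈ Icc (z₀.2 - r) (z₀.2 + r), (x, y) ∈ S := fun y hy => ⟨hx, hy⟩
    have hsl : Continuous (fun s : ℝ => ((x, s) : ℝ×ℝ)) := continuous_const.prodMk continuous_id
    have hder1 : ∀ y ∈ Icc (z₀.2 - r) (z₀.2 + r),
        HasDerivAt (fun s => G (x, s)) (Gy (x, y)) y := fun y _ => line G hGdiff x y
    have hder2 : ∀ y ∈ Icc (z₀.2 - r) (z₀.2 + r),
        HasDerivAt (fun s => G (x, s) ^ q) (U' (x, y)) y := fun y hy =>
      HasDerivAt.rpow_const (line G hGdiff x y) (Or.inl (hSGne _ (hmem y hy)))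
    have hder3 : ∀ y ∈ Icc (z₀.2 - r) (z₀.2 + r),
        HasDerivAt (fun s => U' (x, s)) (U'' (x, y)) y := by
      intro y hy
      have h2 : HasDerivAt (fun s => Gy (x, s) * q) (Gyy (x,y) * q) y :=
        (line Gy hGydiff x y).mul_const q
      have h1 : HasDerivAt (fun s => G (x, s) ^ (q-1))
          (Gy (x,y) * (q-1) * G (x,y) ^ (q-1-1)) y :=
        HasDerivAt.rpow_const (line G hGdiff x y) (Or.inl (hSGne _ (hmem y hy)))
      exact h2.mul h1
    have hcont1 : ContinuousOn (fun s => Gy (x, s)) (Icc (z₀.2 - r) (z₀.2 + r)) :=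
      (hGycont.comp hsl).continuousOn
    have hcont2 : ContinuousOn (fun s => U'' (x, s)) (Icc (z₀.2 - r) (z₀.2 + r)) :=
      hU''contS.comp hsl.continuousOn hmem
    have hb1 : ∀ y ∈ Icc (z₀.2 - r) (z₀.2 + r), |G (x, y)| ≤ A := fun y hy => by
      rw [← Real.norm_eq_abs]; exact hA _ (hmem y hy)
    have hb2 : ∀ y ∈ Icc (z₀.2 - r) (z₀.2 + r), |Gy (x, y)| ≤ A₁ := fun y hy => by
      rw [← Real.norm_eq_abs]; exact hA₁ _ (hmem y hy)
    have hb3 : ∀ y ∈ Icc (z₀.2 - r) (z₀.2 + r), m ≤ |U' (x, y)| := fun y hy => hmle _ (hmem y hy)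
    have hb4 : ∀ y ∈ Icc (z₀.2 - r) (z₀.2 + r), |U'' (x, y)| ≤ M₂ := fun y hy => by
      rw [← Real.norm_eq_abs]; exact hM₂ _ (hmem y hy)
    have hb := osc_bound hle hm hθne hder1 hder2 hder3 hcont1 hcont2 hb1 hb2 hb3 hb4
    rw [Real.norm_eq_abs]
    calc |∫ y in (z₀.2 - r)..(z₀.2 + r), G (x,y) * Real.cos (θ * G (x,y) ^ q)|
        ≤ (2*A/m + ((z₀.2 + r) - (z₀.2 - r))*(A₁/m + A*M₂/m^2)) / |θ| := hb
      _ = K / |θ| := by rw [hKdef]; ring_nf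
  -- combine
  have houter : ‖∫ z in S, cosW z‖ ≤ (K / |θ|) * (2*r) := by
    rw [hfub]
    have := MeasureTheory.norm_setIntegral_le_of_norm_le_const hvolI hinner
    · calc ‖∫ x in Icc (z₀.1 - r) (z₀.1 + r), ∫ y in Icc (z₀.2 - r) (z₀.2 + r), cosW (x, y)‖
          ≤ (K / |θ|) * (volume (Icc (z₀.1 - r) (z₀.1 + r))).toReal := this
        _ = (K / |θ|) * (2*r) := by
            rw [Real.volume_Icc, show z₀.1 + r - (z₀.1 - r) = 2*r by ring,
              ENNReal.toReal_ofReal (by linarith)]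
  have hKbound : (K / |θ|) * (2*r) ≤ δ := by
    have hθK : (2*r) * K / δ ≤ |θ| := le_trans (le_max_right _ _) hθ
    rw [div_mul_eq_mul_div, div_le_iff₀ (by linarith : (0:ℝ) < |θ|)]
    calc K * (2*r) = (2*r) * K := by ring
      _ = ((2*r) * K / δ) * δ := by field_simp
      _ ≤ |θ| * δ := by
          apply mul_le_mul_of_nonneg_right hθK hδ.le
      _ = δ * |θ| := by ring
  calc δ = ρ₀ * ((2*r) * (2*r)) - δ := by rw [hδdef]; ring
    _ ≤ (∫ z in S, G z) - ∫ z in S, cosW z := by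
        have h1 : ∫ z in S, cosW z ≤ δ :=
          le_trans (le_trans (le_abs_self _) (by rw [← Real.norm_eq_abs]; exact houter)) hKbound
        linarith [hSGlow]
    _ = ∫ z in S, W z := hsplit.symm
    _ ≤ ∫ z, W z := hstep1
lemma key_osc_both (G : ℝ×ℝ → ℝ) (hG : ContDiff ℝ (⊤:ℕ∞) G) (hG0 : ∀ z, 0 ≤ G z)
    (hGi : Integrable G) (q : ℝ) (hq : 0 < q) (z₀ : ℝ×ℝ)
    (hd : fderiv ℝ G z₀ (1,0) ≠ 0 ∨ fderiv ℝ G z₀ (0,1) ≠ 0) :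
    ∃ θ₀ > (0:ℝ), ∃ δ > (0:ℝ), ∀ θ : ℝ, θ₀ ≤ |θ| →
      δ ≤ ∫ z, G z * (1 - Real.cos (θ * G z ^ q)) := by
  rcases hd with hd | hd
  swap
  · exact key_osc G hG hG0 hGi q hq z₀ hd
  · -- swap coordinates
    set σ : (ℝ×ℝ) →L[ℝ] (ℝ×ℝ) :=
      (ContinuousLinearMap.snd ℝ ℝ ℝ).prod (ContinuousLinearMap.fst ℝ ℝ ℝ) with hσdef
    have hσcoe : ∀ z : ℝ×ℝ, σ z = (z.2, z.1) := fun z => rfl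
    set G' : ℝ×ℝ → ℝ := fun z => G (z.2, z.1) with hG'def
    have hG'c : ContDiff ℝ (⊤:ℕ∞) G' := hG.comp σ.contDiff
    have hG'0 : ∀ z, 0 ≤ G' z := fun z => hG0 _
    have hvol : (volume : Measure (ℝ×ℝ)) = (volume : Measure ℝ).prod (volume : Measure ℝ) :=
      Measure.volume_eq_prod ℝ ℝ
    have hG'i : Integrable G' := by
      rw [hvol]
      have hGG : Integrable G ((volume : Measure ℝ).prod (volume : Measure ℝ)) := by
        rw [← hvol]; exact hGi
      exact (Measure.measurePreserving_swap.integrable_comp hGG.aestronglyMeasurable).mpr hGG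
    have hGdiff : Differentiable ℝ G := hG.differentiable (by simp)
    have hfd : ∀ z : ℝ×ℝ, HasFDerivAt G' ((fderiv ℝ G (z.2, z.1)).comp σ) z := by
      intro z
      exact HasFDerivAt.comp z ((hGdiff (z.2, z.1)).hasFDerivAt) σ.hasFDerivAt
    have hd' : fderiv ℝ G' (z₀.2, z₀.1) (0,1) ≠ 0 := by
      rw [(hfd (z₀.2, z₀.1)).fderiv]
      simpa [hσcoe] using hd
    obtain ⟨θ₀, hθ₀, δ, hδ, hbound⟩ := key_osc G' hG'c hG'0 hG'i q hq (z₀.2, z₀.1) hd'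
    refine ⟨θ₀, hθ₀, δ, hδ, fun θ hθ => ?_⟩
    have h := hbound θ hθ
    have heq : ∫ z, G' z * (1 - Real.cos (θ * G' z ^ q)) =
        ∫ z, G z * (1 - Real.cos (θ * G z ^ q)) := by
      rw [hvol]
      exact MeasurePreserving.integral_comp Measure.measurePreserving_swap
        (MeasurableEquiv.prodComm : (ℝ×ℝ) ≃ᵐ (ℝ×ℝ)).measurableEmbedding
        (fun z => G z * (1 - Real.cos (θ * G z ^ q)))
    rw [← heq]
    exact h

lemma exists_grad (w : SchwartzMap (ℝ×ℝ) ℂ) (hw : ⇑w ≠ 0) :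
    ∃ z₀ : ℝ×ℝ, fderiv ℝ (fun z => ‖w z‖^2) z₀ (1,0) ≠ 0 ∨
      fderiv ℝ (fun z => ‖w z‖^2) z₀ (0,1) ≠ 0 := by
  set g : ℝ×ℝ → ℝ := fun z => ‖w z‖^2 with hgdef
  have hgsmooth : ContDiff ℝ (⊤:ℕ∞) g :=
    (contDiff_norm_sq ℝ (E := ℂ)).comp (w.smooth ⊤)
  have hgdiff : Differentiable ℝ g := hgsmooth.differentiable (by simp)
  by_contra hcon
  push_neg at hcon
  have hzero : ∀ z, fderiv ℝ g z = 0 := by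
    intro z
    obtain ⟨h1, h2⟩ := hcon z
    apply ContinuousLinearMap.ext
    intro v
    have hv : v = v.1 • ((1:ℝ),(0:ℝ)) + v.2 • ((0:ℝ),(1:ℝ)) := by
      simp [Prod.ext_iff]
    have hsplit : (fderiv ℝ g z) v = v.1 * (fderiv ℝ g z) (1,0) + v.2 * (fderiv ℝ g z) (0,1) :=
      calc (fderiv ℝ g z) v = (fderiv ℝ g z) (v.1 • ((1:ℝ),(0:ℝ)) + v.2 • ((0:ℝ),(1:ℝ))) := by
            rw [← hv]
        _ = v.1 * (fderiv ℝ g z) (1,0) + v.2 * (fderiv ℝ g z) (0,1) := by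
            rw [map_add ((fderiv ℝ g z)), ContinuousLinearMap.map_smul,
              ContinuousLinearMap.map_smul, smul_eq_mul, smul_eq_mul]
    rw [hsplit, h1, h2]
    simp
  have hconst := is_const_of_fderiv_eq_zero hgdiff hzero
  obtain ⟨B, hB0, hB⟩ := w.decay 1 0
  have hBn : ∀ x : ℝ×ℝ, ‖x‖ * ‖w x‖ ≤ B := by
    intro x
    have := hB x
    simpa [norm_iteratedFDeriv_zero] using this
  have hzer : ∀ z, g z = 0 := by
    intro z
    have hge : 0 ≤ g z := by positivity
    have hle : g z ≤ 0 := by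
      have htends : Filter.Tendsto (fun n : ℕ => B^2 / (n:ℝ)) Filter.atTop (nhds 0) :=
        tendsto_const_div_atTop_nhds_zero_nat _
      apply ge_of_tendsto htends
      filter_upwards [Filter.eventually_ge_atTop 1] with n hn
      have hn1 : (1:ℝ) ≤ (n:ℝ) := by exact_mod_cast hn
      have heq : g z = g ((n:ℝ), 0) := hconst z _
      have hnorm : ‖(((n:ℝ), 0) : ℝ×ℝ)‖ = (n:ℝ) := by
        simp [Prod.norm_def, abs_of_nonneg (by linarith : (0:ℝ) ≤ (n:ℝ))]
      have hwb : ‖w ((n:ℝ), 0)‖ ≤ B / (n:ℝ) := by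
        have := hBn ((n:ℝ), 0)
        rw [hnorm] at this
        rw [le_div_iff₀ (by linarith : (0:ℝ) < (n:ℝ))]
        linarith [this]
      have : g ((n:ℝ), 0) ≤ (B/(n:ℝ))^2 := by
        rw [hgdef]
        exact pow_le_pow_left₀ (norm_nonneg _) hwb 2
      rw [heq]
      calc g ((n:ℝ),0) ≤ (B/(n:ℝ))^2 := this
        _ = B^2/(n:ℝ)^2 := by rw [div_pow]
        _ ≤ B^2/(n:ℝ) := by
            apply div_le_div_of_nonneg_left (by positivity) (by linarith) ?_
            nlinarith
    linarith
  apply hw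
  funext z
  have := hzer z
  rw [hgdef] at this
  simpa [pow_eq_zero_iff] using this

lemma rpow_diff_lower (P : ℝ) (hP : 1 < P) {a a' : ℝ}
    (ha : a ∈ Set.Icc (1/2:ℝ) 1) (ha' : a' ∈ Set.Icc (1/2:ℝ) 1) :
    ((P-1) * min ((1/2:ℝ) ^ (P-2)) 1) * |a - a'| ≤ |a ^ (P-1) - a' ^ (P-1)| := by
  set cp := (P-1) * min ((1/2:ℝ) ^ (P-2)) 1 with hcpdef
  -- reduce to ordered case
  suffices H : ∀ b b' : ℝ, b ∈ Set.Icc (1/2:ℝ) 1 → b' ∈ Set.Icc (1/2:ℝ) 1 → b' ≤ b →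
      cp * (b - b') ≤ b ^ (P-1) - b' ^ (P-1) by
    rcases le_total a' a with h | h
    · rw [abs_of_nonneg (by linarith), abs_of_nonneg]
      · exact H a a' ha ha' h
      · have := H a a' ha ha' h
        have hcp : 0 < cp := by
          rw [hcpdef]
          apply mul_pos (by linarith)
          apply lt_min (Real.rpow_pos_of_pos (by norm_num) _) one_pos
        nlinarith
    · rw [abs_sub_comm, abs_sub_comm (a ^ (P-1)), abs_of_nonneg (by linarith), abs_of_nonneg]
      · exact H a' a ha' ha h
      · have := H a' a ha' ha h
        have hcp : 0 < cp := by
          rw [hcpdef]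
          apply mul_pos (by linarith)
          apply lt_min (Real.rpow_pos_of_pos (by norm_num) _) one_pos
        nlinarith
  intro b b' hb hb' hle
  rcases eq_or_lt_of_le hle with heq | hlt
  · rw [heq]; simp
  · obtain ⟨c, hc, hceq⟩ := exists_hasDerivAt_eq_slope (fun x => x ^ (P-1))
      (fun x => (P-1) * x ^ (P-1-1)) hlt
      (fun x hx => by
        have hx0 : (0:ℝ) < x := by have h1 := hb'.1; have h2 := hx.1; linarith
        exact ((Real.hasDerivAt_rpow_const (Or.inl (ne_of_gt hx0))).continuousAt).continuousWithinAt)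
      (fun x hx => by
        have hx0 : (0:ℝ) < x := by have h1 := hb'.1; have h2 := hx.1; linarith
        exact Real.hasDerivAt_rpow_const (Or.inl (ne_of_gt hx0)))
    have hc1 : 1/2 < c := lt_of_le_of_lt hb'.1 hc.1
    have hc2 : c < 1 := lt_of_lt_of_le hc.2 hb.2
    have hc0 : 0 < c := by linarith
    have hmin : min ((1/2:ℝ) ^ (P-2)) 1 ≤ c ^ (P-2) := by
      rcases le_or_gt 2 P with h2 | h2
      · refine le_trans (min_le_left _ _) ?_
        exact Real.rpow_le_rpow (by norm_num) hc1.le (by linarith)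
      · refine le_trans (min_le_right _ _) ?_
        have := Real.rpow_le_rpow_of_nonpos hc0 hc2.le (by linarith : P - 2 ≤ 0)
        rwa [Real.one_rpow] at this
    have hslope : b ^ (P-1) - b' ^ (P-1) = ((P-1) * c ^ (P-1-1)) * (b - b') := by
      rw [hceq]
      rw [div_mul_eq_mul_div, mul_div_assoc, div_self (by linarith : b - b' ≠ 0), mul_one]
    rw [hslope, hcpdef]
    apply mul_le_mul_of_nonneg_right _ (by linarith)
    rw [show P - 1 - 1 = P - 2 by ring]
    apply mul_le_mul_of_nonneg_left hmin (by linarith)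

/-- **L² phase decoherence of the dispersionless solutions.** -/
theorem L2_phase_decoherence (P : ℝ) (hP : 1 < P) (μ : ℝ) (hμ : μ = 1 ∨ μ = -1)
    (w : SchwartzMap (ℝ × ℝ) ℂ) (hw : ⇑w ≠ 0) :
    ∃ C > (0 : ℝ), ∀ a a' : ℝ, a ∈ Set.Icc (1 / 2 : ℝ) 1 → a' ∈ Set.Icc (1 / 2 : ℝ) 1 →
      a ≠ a' → ∀ t : ℝ, C * |a - a'|⁻¹ ≤ t →
      ENNReal.ofReal (1 / C) ≤
        eLpNorm (fun q : ℝ × ℝ =>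
          (a : ℂ) * w q * Complex.exp (-Complex.I * μ * t * (a ^ (P - 1) * ‖w q‖ ^ (P - 1) : ℝ)) -
          (a' : ℂ) * w q * Complex.exp (-Complex.I * μ * t * (a' ^ (P - 1) * ‖w q‖ ^ (P - 1) : ℝ)))
          2 volume := by
  set g : ℝ×ℝ → ℝ := fun z => ‖w z‖^2 with hgdef
  have hg0 : ∀ z, 0 ≤ g z := fun z => by positivity
  have hgsmooth : ContDiff ℝ (⊤:ℕ∞) g :=
    (contDiff_norm_sq ℝ (E := ℂ)).comp (w.smooth ⊤)
  have hgcont : Continuous g := hgsmooth.continuous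
  obtain ⟨B₀, hB₀pos, hB₀⟩ := w.decay 0 0
  have hB₀' : ∀ x, ‖w x‖ ≤ B₀ := fun x => by simpa [norm_iteratedFDeriv_zero] using hB₀ x
  have hgint : Integrable g := by
    apply Integrable.mono (w.integrable.norm.const_mul B₀) hgcont.aestronglyMeasurable
    apply Filter.Eventually.of_forall
    intro z
    rw [Real.norm_eq_abs, abs_of_nonneg (hg0 z)]
    calc g z ≤ B₀ * ‖w z‖ := by
          have h1 := hB₀' z
          have h2 := norm_nonneg (w z)
          show ‖w z‖^2 ≤ B₀ * ‖w z‖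
          nlinarith
      _ ≤ ‖B₀ * ‖w z‖‖ := le_abs_self _
  obtain ⟨z₀, hz₀⟩ := exists_grad w hw
  set qe : ℝ := (P-1)/2 with hqe
  have hqe0 : 0 < qe := by rw [hqe]; linarith
  obtain ⟨θ₀, hθ₀, δ, hδ, hkey⟩ := key_osc_both g hgsmooth hg0 hgint qe hqe0 z₀ hz₀
  set cp : ℝ := (P-1) * min ((1/2:ℝ) ^ (P-2)) 1 with hcp
  have hcp0 : 0 < cp :=
    mul_pos (by linarith) (lt_min (Real.rpow_pos_of_pos (by norm_num) _) one_pos)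
  set C : ℝ := max (max 1 (θ₀ / cp)) (Real.sqrt (2/δ)) with hC
  have hC1 : (1:ℝ) ≤ C := le_trans (le_max_left _ _) (le_max_left _ _)
  have hC0 : (0:ℝ) < C := lt_of_lt_of_le one_pos hC1
  refine ⟨C, hC0, ?_⟩
  intro a a' ha ha' hne t ht
  have habs : 0 < |a - a'| := abs_pos.mpr (sub_ne_zero.mpr hne)
  have ht0 : 0 < t := lt_of_lt_of_le (by positivity) ht
  set θ : ℝ := -(μ * t * (a ^ (P-1) - a' ^ (P-1))) with hθdef
  have hθabs : |θ| = t * |a ^ (P-1) - a' ^ (P-1)| := by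
    rw [hθdef, abs_neg, abs_mul, abs_mul]
    rcases hμ with h | h <;> rw [h] <;> simp [abs_of_pos ht0]
  have hgap := rpow_diff_lower P hP ha ha'
  have hθ₀le : θ₀ ≤ |θ| := by
    rw [hθabs]
    have hCcp : θ₀ / cp ≤ C := le_trans (le_max_right _ _) (le_max_left _ _)
    calc θ₀ = (θ₀ / cp) * cp := by field_simp
      _ ≤ C * cp := mul_le_mul_of_nonneg_right hCcp hcp0.le
      _ = (C * |a - a'|⁻¹) * (cp * |a - a'|) := by
          field_simp
      _ ≤ t * |a ^ (P-1) - a' ^ (P-1)| := by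
          apply mul_le_mul ht hgap (by positivity) ht0.le
  have hFθ := hkey θ hθ₀le
  -- relation between ‖w‖^(P-1) and g^qe
  have hwh : ∀ z : ℝ×ℝ, ‖w z‖ ^ (P-1) = g z ^ qe := by
    intro z
    rw [hgdef, hqe]
    have h1 : (P - 1) = (2:ℝ) * ((P-1)/2) := by ring
    rw [h1, Real.rpow_mul (norm_nonneg _)]
    norm_num
  -- lower bound function
  set Gq : ℝ×ℝ → ℝ :=
    fun z => 1/2 * (‖w z‖ * ‖Complex.exp (((θ * g z ^ qe : ℝ):ℂ) * Complex.I) - 1‖) with hGqdef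
  have hGq0 : ∀ z, 0 ≤ Gq z := fun z => by positivity
  have hGqcont : Continuous Gq := by
    apply continuous_const.mul
    apply (w.continuous.norm).mul
    apply Continuous.norm
    apply Continuous.sub _ continuous_const
    apply Complex.continuous_exp.comp
    apply Continuous.mul _ continuous_const
    exact Complex.continuous_ofReal.comp
      (continuous_const.mul (hgcont.rpow_const (fun z => Or.inr hqe0.le)))
  -- pointwise bound
  have hlow : ∀ z : ℝ×ℝ, Gq z ≤
      ‖(a : ℂ) * w z * Complex.exp (-Complex.I * μ * t * (a ^ (P - 1) * ‖w z‖ ^ (P - 1) : ℝ)) -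
        (a' : ℂ) * w z * Complex.exp (-Complex.I * μ * t * (a' ^ (P - 1) * ‖w z‖ ^ (P - 1) : ℝ))‖ := by
    intro z
    set α : ℝ := -(μ * t * (a ^ (P-1) * ‖w z‖ ^ (P-1))) with hα
    set β : ℝ := -(μ * t * (a' ^ (P-1) * ‖w z‖ ^ (P-1))) with hβ
    have e1 : -Complex.I * (μ:ℂ) * (t:ℂ) * ((a ^ (P-1) * ‖w z‖ ^ (P-1) : ℝ):ℂ) = (α:ℂ) * Complex.I := by
      rw [hα]; push_cast; ring
    have e2 : -Complex.I * (μ:ℂ) * (t:ℂ) * ((a' ^ (P-1) * ‖w z‖ ^ (P-1) : ℝ):ℂ) = (β:ℂ) * Complex.I := by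
      rw [hβ]; push_cast; ring
    rw [e1, e2]
    have factored : (a : ℂ) * w z * Complex.exp ((α:ℂ) * Complex.I) -
        (a' : ℂ) * w z * Complex.exp ((β:ℂ) * Complex.I)
        = w z * ((a:ℂ) * Complex.exp ((α:ℂ) * Complex.I) - (a':ℂ) * Complex.exp ((β:ℂ) * Complex.I)) := by
      ring
    rw [factored, norm_mul]
    have hab : α - β = θ * g z ^ qe := by
      rw [hα, hβ, hθdef, ← hwh z]; ring
    have hpl := pointwise_lower a a' α β ha ha'
    calc Gq z = ‖w z‖ * (1/2 * ‖Complex.exp (((α - β : ℝ):ℂ) * Complex.I) - 1‖) := by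
          rw [hGqdef, hab]; ring
      _ ≤ ‖w z‖ * ‖(a:ℂ) * Complex.exp ((α:ℂ) * Complex.I) - (a':ℂ) * Complex.exp ((β:ℂ) * Complex.I)‖ :=
          mul_le_mul_of_nonneg_left hpl (norm_nonneg _)
  -- W integrand
  set W : ℝ×ℝ → ℝ := fun z => g z * (1 - Real.cos (θ * g z ^ qe)) with hW
  have hGqsq : ∀ z, Gq z ^ 2 = 1/2 * W z := by
    intro z
    rw [hGqdef, hW]
    rw [mul_pow, mul_pow, normSq_exp_sub_one (θ * g z ^ qe)]
    rw [hgdef]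
    ring
  have hGqsqint : Integrable (fun z => Gq z ^ 2) := by
    apply Integrable.mono (hgint.const_mul 1) ((hGqcont.pow 2).aestronglyMeasurable)
    apply Filter.Eventually.of_forall
    intro z
    rw [Real.norm_eq_abs, abs_of_nonneg (sq_nonneg _), Pi.pow_apply, hGqsq z, hW]
    have hc1 : Real.cos (θ * g z ^ qe) ≤ 1 := Real.cos_le_one _
    have hc2 : -1 ≤ Real.cos (θ * g z ^ qe) := Real.neg_one_le_cos _
    have h0 := hg0 z
    rw [Real.norm_eq_abs, abs_of_nonneg (by linarith : (0:ℝ) ≤ 1 * g z)]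
    nlinarith
  have hint_eq : ∫ z, Gq z ^ 2 = 1/2 * ∫ z, W z := by
    rw [← integral_const_mul]
    exact integral_congr_ae (Filter.Eventually.of_forall (fun z => hGqsq z))
  -- eLpNorm chain
  rw [MeasureTheory.eLpNorm_eq_lintegral_rpow_enorm_toReal two_ne_zero ENNReal.ofNat_ne_top]
  have h2r : (2:ℝ≥0∞).toReal = 2 := by simp
  rw [h2r]
  have hXrw : ENNReal.ofReal (1/C) = ((ENNReal.ofReal (1/C)) ^ (2:ℝ)) ^ ((1:ℝ)/2) := by
    rw [← ENNReal.rpow_mul]; norm_num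
  rw [hXrw]
  apply ENNReal.rpow_le_rpow _ (by norm_num : (0:ℝ) ≤ 1/2)
  rw [ENNReal.ofReal_rpow_of_nonneg (by positivity) (by norm_num : (0:ℝ) ≤ 2)]
  calc ENNReal.ofReal ((1/C) ^ (2:ℝ)) ≤ ENNReal.ofReal (δ/2) := by
        apply ENNReal.ofReal_le_ofReal
        have hCs : Real.sqrt (2/δ) ≤ C := le_max_right _ _
        have h2δ : (0:ℝ) < 2/δ := by positivity
        have hsq : 2/δ ≤ C^2 := by
          calc 2/δ = (Real.sqrt (2/δ))^2 := (Real.sq_sqrt h2δ.le).symm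
            _ ≤ C^2 := pow_le_pow_left₀ (Real.sqrt_nonneg _) hCs 2
        have hC2 : (0:ℝ) < C^2 := by positivity
        have hrw : (1/C) ^ (2:ℝ) = 1/C^2 := by
          rw [Real.rpow_two, div_pow, one_pow]
        rw [hrw, div_le_div_iff₀ hC2 (by norm_num : (0:ℝ) < 2)]
        have hmul := mul_le_mul_of_nonneg_left hsq hδ.le
        have hfld : δ * (2/δ) = 2 := by field_simp
        nlinarith
    _ ≤ ENNReal.ofReal (∫ z, Gq z ^ 2) := by
        apply ENNReal.ofReal_le_ofReal
        rw [hint_eq]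
        have hFθ' : δ ≤ ∫ z, W z := hFθ
        linarith
    _ ≤ ∫⁻ z, ENNReal.ofReal (Gq z ^ 2) := by
        rw [integral_eq_lintegral_of_nonneg_ae (Filter.Eventually.of_forall (fun z => sq_nonneg _))
          ((hGqcont.pow 2).aestronglyMeasurable)]
        exact ENNReal.ofReal_toReal_le
    _ ≤ ∫⁻ z, (‖(a : ℂ) * w z * Complex.exp (-Complex.I * μ * t * (a ^ (P - 1) * ‖w z‖ ^ (P - 1) : ℝ)) -
          (a' : ℂ) * w z * Complex.exp (-Complex.I * μ * t * (a' ^ (P - 1) * ‖w z‖ ^ (P - 1) : ℝ))‖₊ : ℝ≥0∞) ^ (2:ℝ) := by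
        have hpt : ∀ z : ℝ×ℝ, ENNReal.ofReal (Gq z ^ 2) ≤
            (‖(a : ℂ) * w z * Complex.exp (-Complex.I * μ * t * (a ^ (P - 1) * ‖w z‖ ^ (P - 1) : ℝ)) -
            (a' : ℂ) * w z * Complex.exp (-Complex.I * μ * t * (a' ^ (P - 1) * ‖w z‖ ^ (P - 1) : ℝ))‖₊ : ℝ≥0∞) ^ (2:ℝ) := by
          intro z
          have h1 : ENNReal.ofReal (Gq z ^ 2) = (ENNReal.ofReal (Gq z)) ^ (2:ℝ) := by
            rw [ENNReal.ofReal_rpow_of_nonneg (hGq0 z) (by norm_num : (0:ℝ) ≤ 2), Real.rpow_two]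
          rw [h1]
          apply ENNReal.rpow_le_rpow _ (by norm_num : (0:ℝ) ≤ 2)
          rw [← ENNReal.ofReal_coe_nnreal, coe_nnnorm]
          exact ENNReal.ofReal_le_ofReal (hlow z)
        exact lintegral_mono hpt
end
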